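/- arXiv:math/0512480 — 11 statements merged into one kernel-verified Lean document; each statement's English description precedes it below -/
import Mathlib

section
/- Let X and Y be finite-dimensional complex vector spaces, with n = dim X, and let ∂ : Y → Λ²X be a linear map. For a nonzero linear functional z ∈ X*, let δ₂(z) : Λ²X → X and δ₃(z) : Λ³X → Λ²X be the contraction maps, δ₂(z)(x∧y) = z(x)y − z(y)x and δ₃(z)(x∧y∧w) = z(x)·y∧w − z(y)·x∧w + z(w)·x∧y, and let ∇(z) : (Λ³X) × Y → Λ²X be the linear map (ω,u) ↦ δ₃(z)(ω) + ∂(u). Then the cokernel of ∇(z) has complex dimension equal to n − 1 − rank(δ₂(z) ∘ ∂ : Y → X). -/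
open Module ExteriorAlgebra

private lemma extPow_induction {X : Type*} [AddCommGroup X] [Module ℂ X] {n : ℕ}
    {p : (⋀[ℂ]^n X) → Prop}
    (hmulti : ∀ (v : Fin n → X) (h : ιMulti ℂ n v ∈ ⋀[ℂ]^n X), p ⟨ιMulti ℂ n v, h⟩)
    (hzero : p 0)
    (hadd : ∀ a b, p a → p b → p (a + b))
    (hsmul : ∀ (c : ℂ) a, p a → p (c • a)) :
    ∀ w : ⋀[ℂ]^n X, p w := by
  rintro ⟨a, ha⟩
  have ha' : a ∈ Submodule.span ℂ (Set.range (ιMulti ℂ n (M := X))) := by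
    rw [ιMulti_span_fixedDegree]; exact ha
  refine Submodule.span_induction
    (p := fun a _ => ∀ h : a ∈ ⋀[ℂ]^n X, p ⟨a, h⟩) ?_ ?_ ?_ ?_ ha' ha
  · rintro x ⟨v, rfl⟩ h; exact hmulti v h
  · intro h; exact hzero
  · intro x y hx hy ihx ihy h
    have hx' : x ∈ ⋀[ℂ]^n X := by rw [← ιMulti_span_fixedDegree]; exact hx
    have hy' : y ∈ ⋀[ℂ]^n X := by rw [← ιMulti_span_fixedDegree]; exact hy
    exact hadd ⟨x, hx'⟩ ⟨y, hy'⟩ (ihx hx') (ihy hy')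
  · intro c x hx ihx h
    have hx' : x ∈ ⋀[ℂ]^n X := by rw [← ιMulti_span_fixedDegree]; exact hx
    exact hsmul c ⟨x, hx'⟩ (ihx hx')

set_option maxHeartbeats 1000000 in
/-- Let `X`, `Y` be finite-dimensional complex vector spaces, `n = dim X`,
and `bd : Y → Λ²X` a linear map.  For a nonzero functional `z ∈ X*`, let `δ₂ z : Λ²X → X` and
`δ₃ z : Λ³X → Λ²X` be the contraction maps, and `∇(z) : Λ³X × Y → Λ²X`, `(ω, u) ↦ δ₃ z ω + bd u`.
Then `dim coker ∇(z) = n - 1 - rank (δ₂ z ∘ bd)`. -/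
theorem stmt_0 (X Y : Type*) [AddCommGroup X] [Module ℂ X] [FiniteDimensional ℂ X]
    [AddCommGroup Y] [Module ℂ Y] [FiniteDimensional ℂ Y]
    (bd : Y →ₗ[ℂ] ⋀[ℂ]^2 X)
    (z : Module.Dual ℂ X) (hz : z ≠ 0)
    (δ₂ : (⋀[ℂ]^2 X) →ₗ[ℂ] X) (δ₃ : (⋀[ℂ]^3 X) →ₗ[ℂ] ⋀[ℂ]^2 X)
    (hδ₂ : ∀ (w : ⋀[ℂ]^2 X) (x y : X),
      (w : ExteriorAlgebra ℂ X) = ιMulti ℂ 2 ![x, y] → δ₂ w = z x • y - z y • x)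
    (hδ₃ : ∀ (ω : ⋀[ℂ]^3 X) (x y w : X),
      (ω : ExteriorAlgebra ℂ X) = ιMulti ℂ 3 ![x, y, w] →
      ((δ₃ ω : ⋀[ℂ]^2 X) : ExteriorAlgebra ℂ X) =
        z x • ιMulti ℂ 2 ![y, w] - z y • ιMulti ℂ 2 ![x, w] + z w • ιMulti ℂ 2 ![x, y]) :
    finrank ℂ ((⋀[ℂ]^2 X) ⧸ LinearMap.range (δ₃.coprod bd)) =
      finrank ℂ X - 1 - finrank ℂ (LinearMap.range (δ₂ ∘ₗ bd)) := by
  classical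
  obtain ⟨v₀, hv₀'⟩ := DFunLike.ne_iff.mp hz
  have hv₀ : z v₀ ≠ 0 := by simpa using hv₀'
  obtain ⟨v, hzv⟩ : ∃ v : X, z v = 1 :=
    ⟨(z v₀)⁻¹ • v₀, by rw [map_smul, smul_eq_mul, inv_mul_cancel₀ hv₀]⟩
  -- membership of wedges
  have hmem2 : ∀ x y : X, ιMulti ℂ 2 ![x, y] ∈ ⋀[ℂ]^2 X :=
    fun x y => ιMulti_range ℂ 2 (Set.mem_range_self _)
  -- δ₂ on wedges
  have hδ₂' : ∀ (x y : X), δ₂ ⟨ιMulti ℂ 2 ![x, y], hmem2 x y⟩ = z x • y - z y • x :=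
    fun x y => hδ₂ _ x y rfl
  -- z ∘ δ₂ = 0
  have hzδ₂ : ∀ w : ⋀[ℂ]^2 X, z (δ₂ w) = 0 := by
    refine extPow_induction ?_ ?_ ?_ ?_
    · intro w h
      have hw : w = ![w 0, w 1] := by funext i; fin_cases i <;> rfl
      revert h; rw [hw]; intro h
      rw [hδ₂ _ (w 0) (w 1) rfl]
      simp [mul_comm]
    · simp
    · intro a b ha hb; rw [map_add, map_add, ha, hb, add_zero]
    · intro c a ha; rw [map_smul, map_smul, ha, smul_zero]
  -- surjectivity of δ₂ onto ker z
  have hrangeδ₂ : LinearMap.range δ₂ = LinearMap.ker z := by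
    apply le_antisymm
    · rintro x ⟨w, rfl⟩; exact hzδ₂ w
    · intro x hx
      have hx' : z x = 0 := hx
      refine ⟨⟨ιMulti ℂ 2 ![v, x], hmem2 v x⟩, ?_⟩
      rw [hδ₂' v x, hzv, hx', one_smul, zero_smul, sub_zero]
  -- δ₂ ∘ δ₃ = 0
  have hδ₂δ₃ : ∀ ω : ⋀[ℂ]^3 X, δ₂ (δ₃ ω) = 0 := by
    refine extPow_induction ?_ ?_ ?_ ?_
    · intro w h
      have hw : w = ![w 0, w 1, w 2] := by funext i; fin_cases i <;> rfl
      revert h; rw [hw]; intro h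
      set a := w 0; set b := w 1; set c := w 2
      have h3 := hδ₃ ⟨ιMulti ℂ 3 ![a, b, c], h⟩ a b c rfl
      have hval : δ₃ ⟨ιMulti ℂ 3 ![a, b, c], h⟩ =
          z a • ⟨ιMulti ℂ 2 ![b, c], hmem2 b c⟩ - z b • ⟨ιMulti ℂ 2 ![a, c], hmem2 a c⟩
            + z c • (⟨ιMulti ℂ 2 ![a, b], hmem2 a b⟩ : ⋀[ℂ]^2 X) := by
        apply Subtype.coe_injective
        push_cast
        exact h3
      rw [hval]
      rw [map_add, map_sub, map_smul, map_smul, map_smul, hδ₂', hδ₂', hδ₂']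
      simp only [smul_sub, smul_smul]
      module
    · simp
    · intro a b ha hb; rw [map_add, map_add, ha, hb, add_zero]
    · intro c a ha; rw [map_smul, map_smul, ha, smul_zero]
  -- the homotopy map
  have hmemh : ∀ x ∈ ⋀[ℂ]^2 X, (LinearMap.mulLeft ℂ (ι ℂ v)) x ∈ ⋀[ℂ]^3 X := by
    intro x hx
    show ι ℂ v * x ∈ (LinearMap.range (ι ℂ (M := X)) ^ 3 : Submodule ℂ _)
    rw [pow_succ']
    exact Submodule.mul_mem_mul (LinearMap.mem_range_self _ v) hx
  set h : (⋀[ℂ]^2 X) →ₗ[ℂ] ⋀[ℂ]^3 X :=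
    (LinearMap.mulLeft ℂ (ι ℂ v)).restrict hmemh with hhdef
  have hcoe : ∀ w : ⋀[ℂ]^2 X, ((h w : ⋀[ℂ]^3 X) : ExteriorAlgebra ℂ X) = ι ℂ v * (w : ExteriorAlgebra ℂ X) :=
    fun w => rfl
  -- homotopy identity
  have hhom : ∀ w : ⋀[ℂ]^2 X,
      ((δ₃ (h w) : ⋀[ℂ]^2 X) : ExteriorAlgebra ℂ X)
        = z v • (w : ExteriorAlgebra ℂ X) - ι ℂ v * ι ℂ (δ₂ w) := by
    refine extPow_induction ?_ ?_ ?_ ?_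
    · intro w hmw
      have hw : w = ![w 0, w 1] := by funext i; fin_cases i <;> rfl
      revert hmw; rw [hw]; intro hmw
      have hcoe3 : ((h ⟨ιMulti ℂ 2 ![w 0, w 1], hmw⟩ : ⋀[ℂ]^3 X) : ExteriorAlgebra ℂ X)
          = ιMulti ℂ 3 ![v, w 0, w 1] := by
        rw [hcoe]
        simp [ιMulti_succ_apply, Matrix.tail_cons]
      have h3 := hδ₃ (h ⟨ιMulti ℂ 2 ![w 0, w 1], hmw⟩) v (w 0) (w 1) hcoe3
      rw [h3, hδ₂ _ (w 0) (w 1) rfl]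
      rw [map_sub, map_smul, map_smul]
      have e2 : (ι ℂ v : ExteriorAlgebra ℂ X) * ι ℂ (w 1) = ιMulti ℂ 2 ![v, w 1] := by
        simp [ιMulti_succ_apply, Matrix.tail_cons]
      have e3 : (ι ℂ v : ExteriorAlgebra ℂ X) * ι ℂ (w 0) = ιMulti ℂ 2 ![v, w 0] := by
        simp [ιMulti_succ_apply, Matrix.tail_cons]
      rw [mul_sub, mul_smul_comm, mul_smul_comm, e2, e3]
      push_cast
      module
    · simp
    · intro a b ha hb
      rw [map_add, map_add]
      push_cast
      rw [ha, hb, map_add, map_add, mul_add, smul_add]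
      abel
    · intro c a ha
      rw [map_smul, map_smul]
      push_cast
      rw [ha, map_smul δ₂, map_smul (ι ℂ), mul_smul_comm]
      module
  -- exactness: ker δ₂ ⊆ range δ₃
  have hexact : ∀ w : ⋀[ℂ]^2 X, δ₂ w = 0 → ∃ ω, δ₃ ω = w := by
    intro w hw
    refine ⟨h w, ?_⟩
    have := hhom w
    rw [hw, map_zero, mul_zero, sub_zero, hzv, one_smul] at this
    exact Subtype.coe_injective this
  -- the counting argument
  set V := LinearMap.range (δ₂ ∘ₗ bd) with hVdef
  set q : (⋀[ℂ]^2 X) →ₗ[ℂ] X ⧸ V := V.mkQ ∘ₗ δ₂ with hqdef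
  have hVz : V ≤ LinearMap.ker z := by
    rintro x ⟨u, rfl⟩; exact hzδ₂ (bd u)
  have hker : LinearMap.ker q = LinearMap.range (δ₃.coprod bd) := by
    ext w
    constructor
    · intro hw
      have hw' : δ₂ w ∈ V := by
        rw [LinearMap.mem_ker, hqdef, LinearMap.comp_apply, Submodule.mkQ_apply,
          Submodule.Quotient.mk_eq_zero] at hw
        exact hw
      obtain ⟨u, hu⟩ := hw'
      have h2 : δ₂ (w - bd u) = 0 := by
        rw [map_sub, sub_eq_zero, ← hu]; rfl
      obtain ⟨ω, hω⟩ := hexact _ h2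
      refine ⟨(ω, u), ?_⟩
      rw [LinearMap.coprod_apply, hω, sub_add_cancel]
    · rintro ⟨⟨ω, u⟩, rfl⟩
      rw [LinearMap.mem_ker, hqdef, LinearMap.comp_apply, LinearMap.coprod_apply,
        map_add, hδ₂δ₃ ω, zero_add, Submodule.mkQ_apply, Submodule.Quotient.mk_eq_zero]
      exact ⟨u, rfl⟩
  have hrange : LinearMap.range q = Submodule.map V.mkQ (LinearMap.ker z) := by
    rw [hqdef, LinearMap.range_comp, hrangeδ₂]
  -- equivalence with range q
  have e : ((⋀[ℂ]^2 X) ⧸ LinearMap.range (δ₃.coprod bd)) ≃ₗ[ℂ] LinearMap.range q :=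
    (Submodule.quotEquivOfEq _ _ hker.symm).trans q.quotKerEquivRange
  rw [LinearEquiv.finrank_eq e]
  -- compute finrank of range q
  set r : (LinearMap.ker z) →ₗ[ℂ] X ⧸ V := V.mkQ ∘ₗ (LinearMap.ker z).subtype with hrdef
  have hrr : LinearMap.range r = LinearMap.range q := by
    rw [hrange, hrdef, LinearMap.range_comp, Submodule.range_subtype]
  have hrk : LinearMap.ker r = Submodule.comap (LinearMap.ker z).subtype V := by
    rw [hrdef, LinearMap.ker_comp, Submodule.ker_mkQ]
  have hrn := r.finrank_range_add_finrank_ker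
  rw [hrr, hrk] at hrn
  have hcomap : finrank ℂ (Submodule.comap (LinearMap.ker z).subtype V) = finrank ℂ V :=
    LinearEquiv.finrank_eq (Submodule.comapSubtypeEquivOfLe hVz)
  rw [hcomap] at hrn
  -- finrank of ker z
  have hzn := z.finrank_range_add_finrank_ker
  have hzr : finrank ℂ (LinearMap.range z) = 1 := by
    have : LinearMap.range z = ⊤ := by
      rw [LinearMap.range_eq_top]
      intro c
      exact ⟨(c / z v₀) • v₀, by simp [div_mul_cancel₀ _ hv₀, smul_eq_mul]⟩
    rw [this, finrank_top, finrank_self]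
  rw [hzr] at hzn
  omega
end

section
/- Let H¹ and H² be finite-dimensional complex vector spaces with n = dim H¹ > 0, and let μ : H¹ × H¹ → H² be an alternating bilinear map. Suppose there is a finite family {R^α} of nonzero linear subspaces of H¹ such that: (i) R₁(μ) = {0} ∪ ⋃_α R^α; (ii) each R^α is p(α)-isotropic with respect to μ for some p(α) ∈ {0,1}, of dimension at least 2p(α) + 2; (iii) R^α ∩ R^β = {0} whenever α ≠ β. Then for every k with 1 ≤ k ≤ n, the k-th resonance variety satisfies R_k(μ) = {0} ∪ ⋃ {R^α : dim R^α > k + p(α)} (the union being {0} if no such component exists). -/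
open Module

variable {H1 H2 : Type*} [AddCommGroup H1] [Module ℂ H1] [AddCommGroup H2] [Module ℂ H2]

/-- The `k`-th resonance variety of an alternating bilinear map `μ : H¹ × H¹ → H²`:
a nonzero `z` belongs to it iff `dim ker μ_z ≥ k + 1`, and `0` belongs to it iff
`dim H¹ ≥ k`. -/
def resVariety (μ : H1 →ₗ[ℂ] H1 →ₗ[ℂ] H2) (k : ℕ) : Set H1 :=
  {z | (z = 0 ∧ k ≤ finrank ℂ H1) ∨ (z ≠ 0 ∧ k + 1 ≤ finrank ℂ (LinearMap.ker (μ z)))}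

/-- A subspace `W` is `0`-isotropic with respect to `μ` if `μ` vanishes on `W × W`. -/
def IsZeroIsotropic (μ : H1 →ₗ[ℂ] H1 →ₗ[ℂ] H2) (W : Submodule ℂ H1) : Prop :=
  ∀ v ∈ W, ∀ w ∈ W, μ v w = 0

/-- A subspace `W` is `1`-isotropic with respect to `μ` if the span of `μ(W × W)` is
one-dimensional and the restriction of `μ` to `W × W` is non-degenerate. -/
def IsOneIsotropic (μ : H1 →ₗ[ℂ] H1 →ₗ[ℂ] H2) (W : Submodule ℂ H1) : Prop :=
  finrank ℂ (Submodule.span ℂ {h : H2 | ∃ v ∈ W, ∃ w ∈ W, μ v w = h}) = 1 ∧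
  ∀ v ∈ W, v ≠ 0 → ∃ w ∈ W, μ v w ≠ 0

/-- If `R₁(μ) = {0} ∪ ⋃ R^α` with each `R^α` a nonzero linear subspace which is
`p(α)`-isotropic (`p(α) ∈ {0,1}`) of dimension at least `2p(α) + 2`, and `R^α ∩ R^β = 0` for
`α ≠ β`, then for `1 ≤ k ≤ dim H¹` one has
`R_k(μ) = {0} ∪ ⋃ {R^α : dim R^α > k + p(α)}`. -/
theorem stmt_2 [FiniteDimensional ℂ H1] [FiniteDimensional ℂ H2]
    (μ : H1 →ₗ[ℂ] H1 →ₗ[ℂ] H2) (halt : ∀ x : H1, μ x x = 0)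
    (hn : 0 < finrank ℂ H1)
    (ι : Type*) [Fintype ι] (R : ι → Submodule ℂ H1) (p : ι → ℕ)
    (hne : ∀ α, R α ≠ ⊥)
    (hp : ∀ α, p α = 0 ∨ p α = 1)
    (hres : resVariety μ 1 = {0} ∪ ⋃ α, (R α : Set H1))
    (hiso0 : ∀ α, p α = 0 → IsZeroIsotropic μ (R α))
    (hiso1 : ∀ α, p α = 1 → IsOneIsotropic μ (R α))
    (hdim : ∀ α, 2 * p α + 2 ≤ finrank ℂ (R α))
    (hint : ∀ α β, α ≠ β → R α ⊓ R β = ⊥) :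
    ∀ k : ℕ, 1 ≤ k → k ≤ finrank ℂ H1 →
      resVariety μ k =
        {0} ∪ ⋃ α, ⋃ (_ : k + p α < finrank ℂ (R α)), (R α : Set H1) := by
  intro k hk1 hkn
  -- skew-symmetry
  have hskew : ∀ x y : H1, μ x y = -μ y x := by
    intro x y
    have h := halt (x + y)
    simp only [map_add, LinearMap.add_apply, halt, zero_add, add_zero] at h
    exact eq_neg_of_add_eq_zero_right h
  -- nonzero elements with 2-dim kernel are in the union
  have hR1 : ∀ v : H1, v ≠ 0 → 2 ≤ finrank ℂ (LinearMap.ker (μ v)) → ∃ α, v ∈ R α := by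
    intro v hv h2
    have hmem : v ∈ resVariety μ 1 := Or.inr ⟨hv, h2⟩
    rw [hres] at hmem
    obtain h | h := hmem
    · exact absurd h hv
    · simpa using h
  -- two independent vectors in a submodule force dimension ≥ 2
  have hspan2 : ∀ z w : H1, LinearIndependent ℂ ![z, w] → ∀ K : Submodule ℂ H1,
      z ∈ K → w ∈ K → 2 ≤ finrank ℂ K := by
    intro z w hli K hz hw
    have h1 : Submodule.span ℂ (Set.range ![z, w]) ≤ K := by
      rw [Submodule.span_le]
      rintro x ⟨i, rfl⟩
      fin_cases i <;> simpa
    have h2 : finrank ℂ (Submodule.span ℂ (Set.range ![z, w])) = 2 := by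
      rw [finrank_span_eq_card hli, Fintype.card_fin]
    calc (2 : ℕ) = finrank ℂ (Submodule.span ℂ (Set.range ![z, w])) := h2.symm
      _ ≤ finrank ℂ K := Submodule.finrank_mono h1
  -- the kernel of μ_z is contained in the component of z
  have hker_sub : ∀ α, ∀ z ∈ R α, z ≠ 0 → ∀ w ∈ LinearMap.ker (μ z), w ∈ R α := by
    intro α z hz hz0 w hw
    rw [LinearMap.mem_ker] at hw
    by_cases hdep : ∃ c : ℂ, w = c • z
    · obtain ⟨c, rfl⟩ := hdep; exact Submodule.smul_mem _ _ hz
    · have hli : LinearIndependent ℂ ![z, w] := by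
        rw [LinearIndependent.pair_iff]
        intro s t hst
        by_cases ht : t = 0
        · subst ht
          rw [zero_smul, add_zero, smul_eq_zero] at hst
          exact ⟨hst.resolve_right hz0, rfl⟩
        · exfalso
          apply hdep
          refine ⟨-(t⁻¹ * s), ?_⟩
          have h1 : t • w = -(s • z) := eq_neg_of_add_eq_zero_right hst
          calc w = t⁻¹ • (t • w) := (inv_smul_smul₀ ht w).symm
            _ = t⁻¹ • (-(s • z)) := by rw [h1]
            _ = (-(t⁻¹ * s)) • z := by rw [smul_neg, smul_smul, neg_smul]
      have hwz : μ w z = 0 := by rw [hskew, hw, neg_zero]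
      have hmem : ∀ c : ℂ, ∃ β, (z + c • w) ∈ R β := by
        intro c
        have hv0 : z + c • w ≠ 0 := by
          intro h
          have := (LinearIndependent.pair_iff.mp hli 1 c (by simpa using h)).1
          exact one_ne_zero this
        apply hR1 _ hv0
        apply hspan2 z w hli
        · rw [LinearMap.mem_ker]
          simp [map_add, map_smul, LinearMap.add_apply, LinearMap.smul_apply, halt, hwz]
        · rw [LinearMap.mem_ker]
          simp [map_add, map_smul, LinearMap.add_apply, LinearMap.smul_apply, halt, hw]
      choose f hf using hmem
      obtain ⟨c, c', hcc, hfc⟩ := Finite.exists_ne_map_eq_of_infinite f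
      have h1 : (z + c • w) - (z + c' • w) ∈ R (f c) := Submodule.sub_mem _ (hf c) (hfc ▸ hf c')
      have h2 : (c - c') • w ∈ R (f c) := by
        have he : (c - c') • w = (z + c • w) - (z + c' • w) := by module
        rw [he]; exact h1
      have hwmem : w ∈ R (f c) := (Submodule.smul_mem_iff _ (sub_ne_zero.mpr hcc)).mp h2
      have hzmem : z ∈ R (f c) := by
        have h3 : (z + c • w) - c • w ∈ R (f c) :=
          Submodule.sub_mem _ (hf c) (Submodule.smul_mem _ c hwmem)
        simpa using h3
      by_cases hfa : f c = α
      · exact hfa ▸ hwmem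
      · exfalso
        have h4 : z ∈ R (f c) ⊓ R α := ⟨hzmem, hz⟩
        rw [hint _ _ hfa] at h4
        exact hz0 (by simpa using h4)
  -- dimension of the kernel
  have hkerdim : ∀ α, ∀ z ∈ R α, z ≠ 0 →
      finrank ℂ (LinearMap.ker (μ z)) + p α = finrank ℂ (R α) := by
    intro α z hz hz0
    rcases hp α with hp0 | hp1
    · rw [hp0, add_zero]
      have hEq : LinearMap.ker (μ z) = R α :=
        le_antisymm (fun w hw => hker_sub α z hz hz0 w hw)
          (fun w hw => LinearMap.mem_ker.mpr (hiso0 α hp0 z hz w hw))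
      rw [hEq]
    · rw [hp1]
      set f : (R α) →ₗ[ℂ] H2 := (μ z).comp (R α).subtype with hfdef
      have hkermap : LinearMap.ker (μ z) = Submodule.map (R α).subtype (LinearMap.ker f) := by
        ext w
        rw [Submodule.mem_map]
        constructor
        · intro hw
          refine ⟨⟨w, hker_sub α z hz hz0 w hw⟩, ?_, rfl⟩
          simpa [hfdef, LinearMap.mem_ker] using LinearMap.mem_ker.mp hw
        · rintro ⟨⟨w', hw'⟩, hker, rfl⟩
          rw [LinearMap.mem_ker] at hker ⊢
          simpa [hfdef] using hker
      obtain ⟨hL, hnd⟩ := hiso1 α hp1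
      have hrle : LinearMap.range f ≤
          Submodule.span ℂ {h : H2 | ∃ v ∈ R α, ∃ w ∈ R α, μ v w = h} := by
        rintro x ⟨⟨w, hwR⟩, rfl⟩
        exact Submodule.subset_span ⟨z, hz, w, hwR, rfl⟩
      have hrne : LinearMap.range f ≠ ⊥ := by
        obtain ⟨w, hwR, hwne⟩ := hnd z hz hz0
        intro hbot
        apply hwne
        have hm : f ⟨w, hwR⟩ ∈ LinearMap.range f := ⟨_, rfl⟩
        rw [hbot] at hm
        simpa [hfdef] using hm
      have hr1 : finrank ℂ (LinearMap.range f) = 1 := by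
        have hle := Submodule.finrank_mono hrle
        rw [hL] at hle
        have hge : 0 < finrank ℂ (LinearMap.range f) :=
          finrank_pos_iff.mpr (Submodule.nontrivial_iff_ne_bot.mpr hrne)
        omega
      have hrn := LinearMap.finrank_range_add_finrank_ker f
      rw [hkermap, Submodule.finrank_map_subtype_eq]
      omega
  -- the set equality
  ext z
  simp only [resVariety, Set.mem_setOf_eq, Set.mem_union, Set.mem_singleton_iff,
    Set.mem_iUnion, SetLike.mem_coe]
  constructor
  · rintro (⟨rfl, -⟩ | ⟨hz0, hk⟩)
    · exact Or.inl rfl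
    · right
      have h2 : 2 ≤ finrank ℂ (LinearMap.ker (μ z)) := le_trans (by omega) hk
      obtain ⟨α, hα⟩ := hR1 z hz0 h2
      refine ⟨α, ?_, hα⟩
      have := hkerdim α z hα hz0
      omega
  · rintro (rfl | ⟨α, hkd, hα⟩)
    · exact Or.inl ⟨rfl, hkn⟩
    · by_cases hz0 : z = 0
      · exact Or.inl ⟨hz0, hkn⟩
      · refine Or.inr ⟨hz0, ?_⟩
        have := hkerdim α z hα hz0
        omega
end

section
/- Let U, V, H_U, H_V be finite-dimensional complex vector spaces with U ≠ 0 and V ≠ 0, and let μ_U : U × U → H_U and μ_V : V × V → H_V be alternating bilinear maps. Define the alternating bilinear map μ on W = U ⊕ V with values in H_U ⊕ H_V by μ((u,v),(u',v')) = (μ_U(u,u'), μ_V(v,v')). If W is either 0-isotropic or 1-isotropic with respect to μ, then μ_U = 0 and μ_V = 0. -/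
open Module

/-- Let `U ≠ 0`, `V ≠ 0`, and let `μ_U`, `μ_V` be alternating bilinear maps.
Let `μ` on `W = U ⊕ V` be the block sum `μ((u,v),(u',v')) = (μ_U(u,u'), μ_V(v,v'))`.
If `W` is `0`-isotropic or `1`-isotropic with respect to `μ`, then `μ_U = 0` and `μ_V = 0`. -/
theorem stmt_3 (U V HU HV : Type*)
    [AddCommGroup U] [Module ℂ U] [FiniteDimensional ℂ U]
    [AddCommGroup V] [Module ℂ V] [FiniteDimensional ℂ V]
    [AddCommGroup HU] [Module ℂ HU] [FiniteDimensional ℂ HU]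
    [AddCommGroup HV] [Module ℂ HV] [FiniteDimensional ℂ HV]
    [Nontrivial U] [Nontrivial V]
    (μU : U →ₗ[ℂ] U →ₗ[ℂ] HU) (μV : V →ₗ[ℂ] V →ₗ[ℂ] HV)
    (haltU : ∀ u : U, μU u u = 0) (haltV : ∀ v : V, μV v v = 0)
    (μ : (U × V) →ₗ[ℂ] (U × V) →ₗ[ℂ] HU × HV)
    (hμ : ∀ p q : U × V, μ p q = (μU p.1 q.1, μV p.2 q.2))
    (hiso :
      (∀ p q : U × V, μ p q = 0) ∨
      (finrank ℂ
          (Submodule.span ℂ {h : HU × HV | ∃ p q : U × V, μ p q = h}) = 1 ∧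
        ∀ p : U × V, p ≠ 0 → ∃ q : U × V, μ p q ≠ 0)) :
    μU = 0 ∧ μV = 0 := by
  rcases hiso with h0 | ⟨hrank, hnd⟩
  · constructor
    · ext u u'
      have := h0 (u, 0) (u', 0)
      rw [hμ] at this
      simpa using congrArg Prod.fst this
    · ext v v'
      have := h0 (0, v) (0, v')
      rw [hμ] at this
      simpa using congrArg Prod.snd this
  · exfalso
    obtain ⟨u, hu⟩ := exists_ne (0 : U)
    obtain ⟨v, hv⟩ := exists_ne (0 : V)
    obtain ⟨q, hq⟩ := hnd (u, 0) (by simp [Prod.ext_iff, hu])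
    obtain ⟨r, hr⟩ := hnd (0, v) (by simp [Prod.ext_iff, hv])
    rw [hμ] at hq hr
    simp only [map_zero, LinearMap.zero_apply, Prod.mk_eq_zero, not_and_or] at hq hr
    have hx : μU u q.1 ≠ 0 := by simpa using hq
    have hy : μV v r.2 ≠ 0 := by simpa using hr
    set S := Submodule.span ℂ {h : HU × HV | ∃ p q : U × V, μ p q = h}
    set a : HU × HV := (μU u q.1, 0)
    set b : HU × HV := (0, μV v r.2)
    have ha : a ∈ S := Submodule.subset_span ⟨(u, 0), (q.1, 0), by rw [hμ]; simp [a]⟩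
    have hb : b ∈ S := Submodule.subset_span ⟨(0, v), (0, r.2), by rw [hμ]; simp [b]⟩
    have hli : LinearIndependent ℂ ![a, b] := by
      rw [LinearIndependent.pair_iff]
      intro s t hst
      have h1 : s • μU u q.1 = 0 := by
        have := congrArg Prod.fst hst
        simpa [a, b] using this
      have h2 : t • μV v r.2 = 0 := by
        have := congrArg Prod.snd hst
        simpa [a, b] using this
      constructor
      · rcases smul_eq_zero.mp h1 with h | h
        · exact h
        · exact absurd h hx
      · rcases smul_eq_zero.mp h2 with h | h
        · exact h
        · exact absurd h hy
    have hspan : Submodule.span ℂ (Set.range ![a, b]) ≤ S := by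
      rw [Submodule.span_le]
      rintro x ⟨i, rfl⟩
      fin_cases i <;> simpa using (by assumption : _)
    have h2le : 2 ≤ finrank ℂ S := by
      have := finrank_span_eq_card hli
      have hm := Submodule.finrank_mono hspan
      rw [this] at hm
      simpa using hm
    omega
end

section
/- Let U, V, H_U, H_V be finite-dimensional complex vector spaces, and μ_U : U × U → H_U, μ_V : V × V → H_V alternating bilinear maps. Define the alternating bilinear map μ = μ_U × μ_V on Z = U ⊕ V with values in H_U ⊕ H_V ⊕ (U ⊗ V) by μ((u,v),(u',v')) = (μ_U(u,u'), μ_V(v,v'), u ⊗ v' − u' ⊗ v). Then for every nonzero element (a,b) ∈ U ⊕ V the following are equivalent: (1) there exists (x,y) ∈ U ⊕ V with μ((a,b),(x,y)) = 0 and (a,b), (x,y) linearly independent; (2) either b = 0 and there exists x ∈ U with μ_U(a,x) = 0 and a, x linearly independent, or a = 0 and there exists y ∈ V with μ_V(b,y) = 0 and b, y linearly independent. Equivalently, R₁(μ_U × μ_V) = R₁(μ_U) × {0} ∪ {0} × R₁(μ_V). -/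
open Module
open scoped TensorProduct

lemma aux_dual_one {U : Type*} [AddCommGroup U] [Module ℂ U]
    {a : U} (ha : a ≠ 0) : ∃ f : U →ₗ[ℂ] ℂ, f a = 1 := by
  have h := (Module.forall_dual_apply_eq_zero_iff ℂ a).not.mpr ha
  push_neg at h
  obtain ⟨f, hf⟩ := h
  exact ⟨(f a)⁻¹ • f, by simp [inv_mul_cancel₀ hf]⟩

noncomputable def auxL {U V : Type*} [AddCommGroup U] [Module ℂ U]
    [AddCommGroup V] [Module ℂ V] (f : U →ₗ[ℂ] ℂ) : U ⊗[ℂ] V →ₗ[ℂ] V :=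
  TensorProduct.lift ((LinearMap.lsmul ℂ V).comp f)

@[simp] lemma auxL_tmul {U V : Type*} [AddCommGroup U] [Module ℂ U]
    [AddCommGroup V] [Module ℂ V] (f : U →ₗ[ℂ] ℂ) (u : U) (v : V) :
    auxL f (u ⊗ₜ[ℂ] v) = f u • v := rfl

noncomputable def auxR {U V : Type*} [AddCommGroup U] [Module ℂ U]
    [AddCommGroup V] [Module ℂ V] (g : V →ₗ[ℂ] ℂ) : U ⊗[ℂ] V →ₗ[ℂ] U :=
  TensorProduct.lift ((LinearMap.lsmul ℂ U).comp g).flip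

@[simp] lemma auxR_tmul {U V : Type*} [AddCommGroup U] [Module ℂ U]
    [AddCommGroup V] [Module ℂ V] (g : V →ₗ[ℂ] ℂ) (u : U) (v : V) :
    auxR g (u ⊗ₜ[ℂ] v) = g v • u := rfl

lemma aux_tmul_zero {U V : Type*} [AddCommGroup U] [Module ℂ U]
    [AddCommGroup V] [Module ℂ V] {a : U} (ha : a ≠ 0) {y : V}
    (h : a ⊗ₜ[ℂ] y = 0) : y = 0 := by
  obtain ⟨f, hf⟩ := aux_dual_one ha
  have := congrArg (auxL f) h
  simpa [hf] using this

lemma aux_tmul_zero' {U V : Type*} [AddCommGroup U] [Module ℂ U]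
    [AddCommGroup V] [Module ℂ V] {b : V} (hb : b ≠ 0) {x : U}
    (h : x ⊗ₜ[ℂ] b = 0) : x = 0 := by
  obtain ⟨g, hg⟩ := aux_dual_one hb
  have := congrArg (auxR g) h
  simpa [hg] using this

lemma aux_rank1 {U V : Type*} [AddCommGroup U] [Module ℂ U]
    [AddCommGroup V] [Module ℂ V] {a x : U} {b y : V}
    (ha : a ≠ 0) (hb : b ≠ 0) (h : a ⊗ₜ[ℂ] y = x ⊗ₜ[ℂ] b) :
    ∃ c : ℂ, x = c • a ∧ y = c • b := by
  obtain ⟨f, hf⟩ := aux_dual_one ha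
  obtain ⟨g, hg⟩ := aux_dual_one hb
  have h1 : y = f x • b := by
    have := congrArg (auxL f) h; simpa [hf] using this
  have h2 : x = g y • a := by
    have := congrArg (auxR g) h; simpa [hg] using this.symm
  refine ⟨g y, h2, ?_⟩
  calc y = f x • b := h1
    _ = (g y * f a) • b := by rw [h2, map_smul, smul_eq_mul]
    _ = g y • b := by rw [hf, mul_one]

lemma aux_li_fst {U V : Type*} [AddCommGroup U] [Module ℂ U]
    [AddCommGroup V] [Module ℂ V] {a x : U} :
    LinearIndependent ℂ ![(a, (0 : V)), (x, 0)] ↔ LinearIndependent ℂ ![a, x] := by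
  rw [LinearIndependent.pair_iff, LinearIndependent.pair_iff]
  constructor <;> intro h s t hst
  · exact h s t (by simp [Prod.ext_iff, hst])
  · have := congrArg Prod.fst hst
    exact h s t (by simpa using this)

lemma aux_li_snd {U V : Type*} [AddCommGroup U] [Module ℂ U]
    [AddCommGroup V] [Module ℂ V] {b y : V} :
    LinearIndependent ℂ ![((0 : U), b), (0, y)] ↔ LinearIndependent ℂ ![b, y] := by
  rw [LinearIndependent.pair_iff, LinearIndependent.pair_iff]
  constructor <;> intro h s t hst
  · exact h s t (by simp [Prod.ext_iff, hst])
  · have := congrArg Prod.snd hst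
    exact h s t (by simpa using this)

/-- For alternating bilinear maps `μ_U : U × U → H_U`, `μ_V : V × V → H_V`,
let `μ = μ_U × μ_V` on `Z = U ⊕ V`, with values in `H_U ⊕ H_V ⊕ (U ⊗ V)`, be given by
`μ((u,v),(u',v')) = (μ_U(u,u'), μ_V(v,v'), u ⊗ v' − u' ⊗ v)`.  Then for every nonzero
`(a,b) ∈ U ⊕ V`, membership of `(a,b)` in `R₁(μ)` is equivalent to `b = 0` and `a ∈ R₁(μ_U)`,
or `a = 0` and `b ∈ R₁(μ_V)`; i.e. `R₁(μ_U × μ_V) = R₁(μ_U) × 0 ∪ 0 × R₁(μ_V)`. -/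
theorem stmt_4 (U V HU HV : Type*)
    [AddCommGroup U] [Module ℂ U] [FiniteDimensional ℂ U]
    [AddCommGroup V] [Module ℂ V] [FiniteDimensional ℂ V]
    [AddCommGroup HU] [Module ℂ HU] [FiniteDimensional ℂ HU]
    [AddCommGroup HV] [Module ℂ HV] [FiniteDimensional ℂ HV]
    (μU : U →ₗ[ℂ] U →ₗ[ℂ] HU) (μV : V →ₗ[ℂ] V →ₗ[ℂ] HV)
    (haltU : ∀ u : U, μU u u = 0) (haltV : ∀ v : V, μV v v = 0)
    (μ : (U × V) →ₗ[ℂ] (U × V) →ₗ[ℂ] HU × HV × (U ⊗[ℂ] V))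
    (hμ : ∀ p q : U × V,
      μ p q = (μU p.1 q.1, μV p.2 q.2, p.1 ⊗ₜ[ℂ] q.2 - q.1 ⊗ₜ[ℂ] p.2)) :
    ∀ (a : U) (b : V), (a, b) ≠ (0 : U × V) →
      ((∃ xy : U × V, μ (a, b) xy = 0 ∧ LinearIndependent ℂ ![(a, b), xy]) ↔
        ((b = 0 ∧ ∃ x : U, μU a x = 0 ∧ LinearIndependent ℂ ![a, x]) ∨
         (a = 0 ∧ ∃ y : V, μV b y = 0 ∧ LinearIndependent ℂ ![b, y]))) := by
  intro a b hab
  constructor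
  · rintro ⟨⟨x, y⟩, hz, hli⟩
    rw [hμ] at hz
    simp only [Prod.ext_iff, Prod.fst_zero, Prod.snd_zero] at hz
    obtain ⟨h1, h2, h3⟩ := hz
    have h3' : a ⊗ₜ[ℂ] y = x ⊗ₜ[ℂ] b := sub_eq_zero.mp h3
    by_cases hb : b = 0
    · subst hb
      have ha : a ≠ 0 := fun h => hab (by simp [h])
      have hy : y = 0 := aux_tmul_zero ha (by simpa using h3')
      subst hy
      exact Or.inl ⟨rfl, x, h1, aux_li_fst.mp hli⟩
    · by_cases ha : a = 0
      · subst ha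
        have hx : x = 0 := aux_tmul_zero' hb (by simpa using h3'.symm)
        subst hx
        exact Or.inr ⟨rfl, y, h2, aux_li_snd.mp hli⟩
      · exfalso
        obtain ⟨c, hx, hy⟩ := aux_rank1 ha hb h3'
        rw [LinearIndependent.pair_iff] at hli
        have := hli (-c) 1 (by rw [hx, hy]; simp [Prod.ext_iff])
        exact one_ne_zero this.2
  · rintro (⟨hb, x, h1, hli⟩ | ⟨ha, y, h2, hli⟩)
    · subst hb
      refine ⟨(x, 0), ?_, aux_li_fst.mpr hli⟩
      rw [hμ]; simp [h1]
    · subst ha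
      refine ⟨(0, y), ?_, aux_li_snd.mpr hli⟩
      rw [hμ]; simp [h2]
end

section
/- Let G₁ and G₂ be finitely presented groups such that H¹(G₁, ℂ) ≠ 0 and H¹(G₂, ℂ) ≠ 0 (equivalently, both have positive first Betti number). Then for every character ρ : G₁ ∗ G₂ → ℂ* of the free product G₁ ∗ G₂, the first group cohomology H¹(G₁ ∗ G₂, ℂ_ρ) is nonzero. In other words, the first characteristic variety V₁(G₁ ∗ G₂) is the whole character group Hom(G₁ ∗ G₂, ℂ*). -/
/-- The rank-one representation `ℂ_ρ` of `G` determined by a character `ρ : G → ℂ*`: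
`g` acts on `ℂ` as multiplication by `ρ(g)`. -/
def charRep {G : Type} [Group G] (ρ : G →* ℂˣ) : Representation ℂ G ℂ :=
  (Algebra.lmul ℂ ℂ).toRingHom.toMonoidHom.comp ((Units.coeHom ℂ).comp ρ)

/-- A group is finitely presented if it is isomorphic to the quotient of a finitely generated
free group by the normal closure of finitely many relators. -/
def FinitelyPresentedGroup (G : Type*) [Group G] : Prop :=
  ∃ (n : ℕ) (rels : Finset (FreeGroup (Fin n))),
    Nonempty (PresentedGroup (rels : Set (FreeGroup (Fin n))) ≃* G)

/-! A 1-cocycle `G → V` is the same as a section `g ↦ (f g, g)` of `V ⋊ G → G`, so by the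
universal property of `G₁ ∗ G₂` cocycles on the two factors glue to a cocycle on the free product,
and the glued cocycle is a coboundary only if both pieces are coboundaries of one common vector.
If `ρ` is trivial on `G₁`, a nonzero homomorphism `G₁ → ℂ` (glued with `0`) is never a
coboundary; symmetrically for `G₂`. Otherwise glue `g ↦ ρ g - 1` on `G₁` with `0` on `G₂`: on
`G₁` it is the coboundary of `1` only, and `1` does not trivialise `0` on `G₂` since `ρ` is
nontrivial there. -/

namespace Representation

variable {k G V : Type*} [CommSemiring k] [Group G] [AddCommGroup V] [Module k V]
  (ρ : Representation k G V)

def toMulAutMultiplicative : G →* MulAut (Multiplicative V) where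
  toFun g :=
    { toFun := fun x => .ofAdd (ρ g x.toAdd)
      invFun := fun x => .ofAdd (ρ g⁻¹ x.toAdd)
      left_inv := fun x => by simp
      right_inv := fun x => by simp
      map_mul' := fun x y => by simp [ofAdd_add] }
  map_one' := by ext; simp
  map_mul' g h := by ext; simp

@[simp]
theorem toMulAutMultiplicative_apply (g : G) (x : Multiplicative V) :
    ρ.toMulAutMultiplicative g x = .ofAdd (ρ g x.toAdd) := rfl

def semidirectLift {H : Type*} [Group H] (ι : H →* G) (f : H → V)
    (hf : ∀ g h, f (g * h) = ρ (ι g) (f h) + f g) :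
    H →* Multiplicative V ⋊[ρ.toMulAutMultiplicative] G where
  toFun h := ⟨.ofAdd (f h), ι h⟩
  map_one' := by
    have : f 1 = 0 := by simpa using hf 1 1
    ext <;> simp [this]
  map_mul' g h := by
    ext
    · simp [hf, add_comm]
    · simp

theorem semidirectLift_left {H : Type*} [Group H] (ι : H →* G) (f : H → V)
    (hf : ∀ g h, f (g * h) = ρ (ι g) (f h) + f g) (h : H) :
    (ρ.semidirectLift ι f hf h).left = .ofAdd (f h) := rfl

theorem semidirectLift_right {H : Type*} [Group H] (ι : H →* G) (f : H → V)
    (hf : ∀ g h, f (g * h) = ρ (ι g) (f h) + f g) (h : H) :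
    (ρ.semidirectLift ι f hf h).right = ι h := rfl

theorem left_map_mul_of_right_eq (Φ : G →* Multiplicative V ⋊[ρ.toMulAutMultiplicative] G)
    (hΦ : ∀ g, (Φ g).right = g) (g h : G) :
    (Φ (g * h)).left.toAdd = ρ g (Φ h).left.toAdd + (Φ g).left.toAdd := by
  simp [map_mul, hΦ, add_comm]

variable {G₁ G₂ : Type*} [Group G₁] [Group G₂]

open Monoid.Coprod in
theorem exists_crossedHom_coprod (ρ : Representation k (Monoid.Coprod G₁ G₂) V)
    (f₁ : G₁ → V) (f₂ : G₂ → V)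
    (hf₁ : ∀ g h, f₁ (g * h) = ρ (inl g) (f₁ h) + f₁ g)
    (hf₂ : ∀ g h, f₂ (g * h) = ρ (inr g) (f₂ h) + f₂ g) :
    ∃ F : Monoid.Coprod G₁ G₂ → V, (∀ g h, F (g * h) = ρ g (F h) + F g) ∧
      (∀ g, F (inl g) = f₁ g) ∧ ∀ g, F (inr g) = f₂ g := by
  set Φ := lift (ρ.semidirectLift inl f₁ hf₁) (ρ.semidirectLift inr f₂ hf₂)
  have hΦ : ∀ w, (Φ w).right = w := by
    have : SemidirectProduct.rightHom.comp Φ = .id _ := by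
      ext <;> simp [Φ, semidirectLift_right]
    exact DFunLike.congr_fun this
  refine ⟨fun w => (Φ w).left.toAdd, ρ.left_map_mul_of_right_eq Φ hΦ, fun g => ?_, fun g => ?_⟩
  · simp [Φ, semidirectLift_left]
  · simp [Φ, semidirectLift_left]

end Representation

namespace groupCohomology

universe u

variable {k G : Type u} [CommRing k] [Group G]

theorem nontrivial_H1_of_notMem_coboundaries₁ {A : Rep k G} (f : cocycles₁ A)
    (hf : ⇑f ∉ coboundaries₁ A) : Nontrivial (H1 A) :=
  ⟨H1π A f, 0, fun h => hf ((H1π_eq_zero_iff f).mp h)⟩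

theorem exists_addMonoidHom_ne_zero_of_nontrivial_H1 (A : Rep k G) [A.IsTrivial]
    [Nontrivial (H1 A)] : ∃ φ : Additive G →+ A, φ ≠ 0 :=
  haveI := (H1IsoOfIsTrivial A).toLinearEquiv.symm.toEquiv.nontrivial
  exists_ne 0

variable {G₁ G₂ : Type u} [Group G₁] [Group G₂]

open Monoid.Coprod in
theorem nontrivial_H1_coprod {A : Rep k (Monoid.Coprod G₁ G₂)} (f₁ : G₁ → A) (f₂ : G₂ → A)
    (hf₁ : ∀ g h, f₁ (g * h) = A.ρ (inl g) (f₁ h) + f₁ g)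
    (hf₂ : ∀ g h, f₂ (g * h) = A.ρ (inr g) (f₂ h) + f₂ g)
    (hne : ∀ a : A, (∀ g, f₁ g = A.ρ (inl g) a - a) → ∃ g, f₂ g ≠ A.ρ (inr g) a - a) :
    Nontrivial (H1 A) := by
  obtain ⟨F, hF, hF₁, hF₂⟩ := A.ρ.exists_crossedHom_coprod f₁ f₂ hf₁ hf₂
  refine nontrivial_H1_of_notMem_coboundaries₁ ⟨F, (mem_cocycles₁_iff F).mpr hF⟩ ?_
  rintro ⟨a, ha⟩
  have hFa (w) : F w = A.ρ w a - a := (congrFun ha w).symm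
  obtain ⟨g, hg⟩ := hne a fun g => by rw [← hF₁, hFa]
  exact hg (by rw [← hF₂, hFa])

end groupCohomology

@[simp]
theorem charRep_apply {G : Type} [Group G] (ρ : G →* ℂˣ) (g : G) (x : ℂ) :
    charRep ρ g x = ρ g * x := rfl

open Monoid.Coprod groupCohomology in
theorem stmt_5_general (G₁ G₂ : Type) [Group G₁] [Group G₂]
    (hb₁ : Nontrivial (groupCohomology (Rep.trivial ℂ G₁ ℂ) 1))
    (hb₂ : Nontrivial (groupCohomology (Rep.trivial ℂ G₂ ℂ) 1))
    (ρ : Monoid.Coprod G₁ G₂ →* ℂˣ) :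
    Nontrivial (groupCohomology (Rep.of (charRep ρ)) 1) := by
  by_cases hl : ∀ g, ρ (inl g) = 1
  · obtain ⟨φ, hφ⟩ := exists_addMonoidHom_ne_zero_of_nontrivial_H1 (Rep.trivial ℂ G₁ ℂ)
    refine nontrivial_H1_coprod (A := Rep.of (charRep ρ)) (fun g => φ (.ofMul g)) 0
      (fun g h => by simp [hl, add_comm]) (by simp) fun a ha => absurd ?_ hφ
    ext g
    simpa [hl] using ha g
  by_cases hr : ∀ g, ρ (inr g) = 1
  · obtain ⟨φ, hφ⟩ := exists_addMonoidHom_ne_zero_of_nontrivial_H1 (Rep.trivial ℂ G₂ ℂ)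
    refine nontrivial_H1_coprod (A := Rep.of (charRep ρ)) 0 (fun g => φ (.ofMul g))
      (by simp) (fun g h => by simp [hr, add_comm]) fun a _ => ?_
    obtain ⟨g, hg⟩ := DFunLike.ne_iff.mp hφ
    exact ⟨g.toMul, by simpa [hr] using hg⟩
  push Not at hl hr
  obtain ⟨g₀, hg₀⟩ := hl
  obtain ⟨h₀, hh₀⟩ := hr
  refine nontrivial_H1_coprod (A := Rep.of (charRep ρ)) (fun g => (ρ (inl g) : ℂ) - 1) 0
    (fun g h => by simp only [map_mul, Units.val_mul, charRep_apply]; ring) (by simp)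
    fun a ha => ⟨h₀, ?_⟩
  have ha₁ : a = 1 := by
    have h : (ρ (inl g₀) : ℂ) - 1 = ρ (inl g₀) * a - a := ha g₀
    have : ((ρ (inl g₀) : ℂ) - 1) * (a - 1) = 0 := by linear_combination -h
    simpa [sub_eq_zero, Units.val_eq_one, hg₀] using this
  show (0 : ℂ) ≠ ρ (inr h₀) * a - a
  rwa [ha₁, mul_one, ne_eq, eq_comm, sub_eq_zero, Units.val_eq_one]

/-- If `G₁`, `G₂` are finitely presented groups with `H¹(G₁,ℂ) ≠ 0` and
`H¹(G₂,ℂ) ≠ 0`, then for every character `ρ : G₁ ∗ G₂ → ℂ*` of the free product, the twisted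
cohomology `H¹(G₁ ∗ G₂, ℂ_ρ)` is nonzero; that is, `V₁(G₁ ∗ G₂)` is the full character group. -/
theorem stmt_5 (G₁ G₂ : Type) [Group G₁] [Group G₂]
    (h₁ : FinitelyPresentedGroup G₁) (h₂ : FinitelyPresentedGroup G₂)
    (hb₁ : Nontrivial (groupCohomology (Rep.trivial ℂ G₁ ℂ) 1))
    (hb₂ : Nontrivial (groupCohomology (Rep.trivial ℂ G₂ ℂ) 1))
    (ρ : Monoid.Coprod G₁ G₂ →* ℂˣ) :
    Nontrivial (groupCohomology (Rep.of (charRep ρ)) 1) :=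
  stmt_5_general G₁ G₂ hb₁ hb₂ ρ
end

section
/- Let G₁ and G₂ be groups and ρ : G₁ ∗ G₂ → ℂ* a character of their free product, with restrictions ρ₁ and ρ₂ to G₁ and G₂ respectively (via the canonical inclusions). Assume H¹(G₁, ℂ_{ρ₁}) and H¹(G₂, ℂ_{ρ₂}) are finite-dimensional over ℂ. Then H¹(G₁ ∗ G₂, ℂ_ρ) is finite-dimensional and dim H¹(G₁ ∗ G₂, ℂ_ρ) = dim H¹(G₁, ℂ_{ρ₁}) + dim H¹(G₂, ℂ_{ρ₂}) + ε, where ε = 1 if both ρ₁ and ρ₂ are nontrivial, and ε = 0 otherwise. -/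
/-!
A 1-cocycle `f : G → A` is the same thing as the homomorphism `g ↦ (f g, g)` from `G` to
`A ⋊ G`, a section of the projection. By the universal property of the free product, sections
over `G₁ ∗ G₂` are pairs of sections over `G₁` and `G₂`, so restriction gives
`Z¹(G₁ ∗ G₂, A) ≅ Z¹(G₁, A) × Z¹(G₂, A)`. Moreover `dim H¹ = dim Z¹ - dim B¹`, and
`B¹(G, ℂ_σ)`, the image of `z ↦ (g ↦ (σ g - 1) z)`, has dimension `0` if `σ = 1` and `1`
otherwise. As `ρ` is trivial iff `ρ₁` and `ρ₂` both are, the defect `ε` is `1` exactly when both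
restrictions are nontrivial.
-/

open Module

open groupCohomology Rep CategoryTheory Monoid

universe u

namespace Representation

variable {k G V : Type*} [CommRing k] [Group G] [AddCommGroup V] [Module k V]

noncomputable def toMulAut (ρ : Representation k G V) : G →* MulAut (Multiplicative V) where
  toFun g := AddEquiv.toMultiplicative
    (LinearMap.GeneralLinearGroup.toLinearEquiv (ρ.asGroupHom g)).toAddEquiv
  map_one' := by ext; simp
  map_mul' g h := by ext; simp

@[simp]
theorem toMulAut_apply (ρ : Representation k G V) (g : G) (x : Multiplicative V) :
    ρ.toMulAut g x = .ofAdd (ρ g x.toAdd) :=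
  rfl

end Representation

namespace groupCohomology

section Semidirect

variable {k G H : Type u} [CommRing k] [Group G] [Group H] {A : Rep.{u} k G}

def cocycles₁.toSemidirectProduct (φ : H →* G) (f : cocycles₁ (res φ A)) :
    H →* Multiplicative A ⋊[A.ρ.toMulAut] G where
  toFun h := ⟨.ofAdd (f h), φ h⟩
  map_one' := by ext <;> simp
  map_mul' g h := by
    ext
    · simp [(mem_cocycles₁_iff f).1 f.2 g h, add_comm]
    · simp

@[simp]
theorem cocycles₁.toSemidirectProduct_apply (φ : H →* G) (f : cocycles₁ (res φ A)) (h : H) :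
    cocycles₁.toSemidirectProduct φ f h = ⟨.ofAdd (f h), φ h⟩ :=
  rfl

theorem mem_cocycles₁_of_rightHom_comp_eq_id (Φ : G →* Multiplicative A ⋊[A.ρ.toMulAut] G)
    (hΦ : SemidirectProduct.rightHom.comp Φ = MonoidHom.id G) :
    (fun g => (Φ g).left.toAdd) ∈ cocycles₁ A := by
  rw [mem_cocycles₁_iff]
  intro g h
  have hg : (Φ g).right = g := DFunLike.congr_fun hΦ g
  simp [hg, add_comm]

end Semidirect

section Coprod

variable {k G₁ G₂ : Type u} [CommRing k] [Group G₁] [Group G₂] (A : Rep.{u} k (Coprod G₁ G₂))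

noncomputable def cocycles₁ResCoprod :
    cocycles₁ A →ₗ[k] cocycles₁ (res Coprod.inl A) × cocycles₁ (res Coprod.inr A) :=
  (mapCocycles₁ (Coprod.inl : G₁ →* _) (𝟙 (res Coprod.inl A))).hom.prod
    (mapCocycles₁ (Coprod.inr : G₂ →* _) (𝟙 (res Coprod.inr A))).hom

variable {A}

@[simp]
theorem cocycles₁ResCoprod_apply_fst (f : cocycles₁ A) (g : G₁) :
    (cocycles₁ResCoprod A f).1 g = f (Coprod.inl g) :=
  rfl

@[simp]
theorem cocycles₁ResCoprod_apply_snd (f : cocycles₁ A) (g : G₂) :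
    (cocycles₁ResCoprod A f).2 g = f (Coprod.inr g) :=
  rfl

variable (A)

theorem injective_cocycles₁ResCoprod : Function.Injective (cocycles₁ResCoprod A) := by
  rw [← LinearMap.ker_eq_bot, LinearMap.ker_eq_bot']
  intro f hf
  refine cocycles₁_ext fun g => ?_
  show f g = 0
  induction g using Coprod.induction_on with
  | inl g₁ => exact congr($(hf).1 g₁)
  | inr g₂ => exact congr($(hf).2 g₂)
  | mul x y hx hy => simp [(mem_cocycles₁_iff f).1 f.2 x y, hx, hy]

theorem surjective_cocycles₁ResCoprod : Function.Surjective (cocycles₁ResCoprod A) := by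
  rintro ⟨f₁, f₂⟩
  let Φ := Coprod.lift (cocycles₁.toSemidirectProduct (A := A) Coprod.inl f₁)
    (cocycles₁.toSemidirectProduct (A := A) Coprod.inr f₂)
  have hΦ : SemidirectProduct.rightHom.comp Φ = MonoidHom.id _ :=
    Coprod.hom_ext (by ext; simp [Φ]) (by ext; simp [Φ])
  refine ⟨⟨_, mem_cocycles₁_of_rightHom_comp_eq_id Φ hΦ⟩, ?_⟩
  ext g <;> simp [Φ]

noncomputable def cocycles₁CoprodEquiv :
    cocycles₁ A ≃ₗ[k] cocycles₁ (res Coprod.inl A) × cocycles₁ (res Coprod.inr A) :=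
  .ofBijective (cocycles₁ResCoprod A)
    ⟨injective_cocycles₁ResCoprod A, surjective_cocycles₁ResCoprod A⟩

instance [Module.Finite k (cocycles₁ (res Coprod.inl A))]
    [Module.Finite k (cocycles₁ (res Coprod.inr A))] : Module.Finite k (cocycles₁ A) :=
  .equiv (cocycles₁CoprodEquiv A).symm

end Coprod

section Field

variable {k G : Type u} [Field k] [Group G] (A : Rep k G)

theorem surjective_H1π : Function.Surjective (H1π A) :=
  (ModuleCat.epi_iff_surjective _).1 inferInstance

theorem ker_H1π :
    LinearMap.ker (H1π A).hom = (coboundaries₁ A).comap (cocycles₁ A).subtype := by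
  ext x
  exact H1π_eq_zero_iff x

noncomputable def kerH1πEquiv : LinearMap.ker (H1π A).hom ≃ₗ[k] coboundaries₁ A :=
  (LinearEquiv.ofEq _ _ (ker_H1π A)).trans
    (Submodule.comapSubtypeEquivOfLe (coboundaries₁_le_cocycles₁ A))

instance [FiniteDimensional k A] : FiniteDimensional k (coboundaries₁ A) :=
  LinearMap.finiteDimensional_range _

theorem finrank_H1_add_finrank_coboundaries₁ [FiniteDimensional k (cocycles₁ A)] :
    finrank k (H1 A) + finrank k (coboundaries₁ A) = finrank k (cocycles₁ A) := by
  rw [← (kerH1πEquiv A).finrank_eq, ← LinearMap.finrank_range_add_finrank_ker (H1π A).hom,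
    LinearMap.range_eq_top.2 (surjective_H1π A), finrank_top]

instance [FiniteDimensional k (cocycles₁ A)] : FiniteDimensional k (H1 A) :=
  Module.Finite.of_surjective _ (surjective_H1π A)

theorem finiteDimensional_cocycles₁ [FiniteDimensional k A] [FiniteDimensional k (H1 A)] :
    FiniteDimensional k (cocycles₁ A) := by
  refine ⟨Submodule.fg_of_fg_map_of_fg_inf_ker (H1π A).hom ?_ ?_⟩
  · rw [Submodule.map_top, LinearMap.range_eq_top.2 (surjective_H1π A)]
    exact Module.finite_def.1 inferInstance
  · rw [top_inf_eq, Submodule.fg_iff_finiteDimensional]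
    exact (kerH1πEquiv A).symm.finiteDimensional

end Field

theorem finrank_H1_coprod_add_finrank_coboundaries₁ {k G₁ G₂ : Type u} [Field k] [Group G₁]
    [Group G₂] (A : Rep.{u} k (Coprod G₁ G₂))
    [FiniteDimensional k (cocycles₁ (res Coprod.inl A))]
    [FiniteDimensional k (cocycles₁ (res Coprod.inr A))] :
    finrank k (H1 A) + finrank k (coboundaries₁ A) =
      (finrank k (H1 (res Coprod.inl A)) + finrank k (coboundaries₁ (res Coprod.inl A))) +
        (finrank k (H1 (res Coprod.inr A)) + finrank k (coboundaries₁ (res Coprod.inr A))) := by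
  rw [finrank_H1_add_finrank_coboundaries₁, finrank_H1_add_finrank_coboundaries₁,
    finrank_H1_add_finrank_coboundaries₁, (cocycles₁CoprodEquiv A).finrank_eq, finrank_prod]

end groupCohomology

open Classical in
theorem finrank_coboundaries₁_charRep {G : Type} [Group G] (σ : G →* ℂˣ) :
    finrank ℂ (coboundaries₁ (Rep.of (charRep σ))) = if σ = 1 then 0 else 1 := by
  split_ifs with hσ
  · subst hσ
    have : (Rep.of (charRep (1 : G →* ℂˣ))).IsTrivial :=
      ⟨fun g => LinearMap.ext fun z => one_mul z⟩
    rw [coboundaries₁_eq_bot_of_isTrivial, finrank_bot]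
  · obtain ⟨g, hg⟩ := DFunLike.ne_iff.1 hσ
    have hinj : Function.Injective (d₀₁ (Rep.of (charRep σ))).hom := by
      rw [← LinearMap.ker_eq_bot, LinearMap.ker_eq_bot']
      intro z hz
      have hgz : (σ g : ℂ) * z - z = 0 := congr_fun hz g
      rw [← sub_one_mul] at hgz
      exact (mul_eq_zero.1 hgz).resolve_left (sub_ne_zero.2 fun h => hg (Units.ext h))
    exact (LinearMap.finrank_range_of_inj hinj).trans (finrank_self ℂ)

/-- Let `ρ` be a character of the free product `G₁ ∗ G₂`, with restrictions
`ρ₁`, `ρ₂` to the factors.  If `H¹(G₁, ℂ_{ρ₁})` and `H¹(G₂, ℂ_{ρ₂})` are finite-dimensional,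
then `H¹(G₁ ∗ G₂, ℂ_ρ)` is finite-dimensional, of dimension
`dim H¹(G₁, ℂ_{ρ₁}) + dim H¹(G₂, ℂ_{ρ₂}) + ε`, where `ε = 1` if both `ρ₁` and `ρ₂` are
nontrivial and `ε = 0` otherwise. -/
theorem stmt_6 (G₁ G₂ : Type) [Group G₁] [Group G₂]
    (ρ : Monoid.Coprod G₁ G₂ →* ℂˣ)
    (h₁ : FiniteDimensional ℂ
      (groupCohomology (Rep.of (charRep (ρ.comp Monoid.Coprod.inl))) 1))
    (h₂ : FiniteDimensional ℂ
      (groupCohomology (Rep.of (charRep (ρ.comp Monoid.Coprod.inr))) 1)) :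
    FiniteDimensional ℂ (groupCohomology (Rep.of (charRep ρ)) 1) ∧
    (ρ.comp Monoid.Coprod.inl ≠ 1 ∧ ρ.comp Monoid.Coprod.inr ≠ 1 →
      finrank ℂ (groupCohomology (Rep.of (charRep ρ)) 1) =
        finrank ℂ (groupCohomology (Rep.of (charRep (ρ.comp Monoid.Coprod.inl))) 1) +
        finrank ℂ (groupCohomology (Rep.of (charRep (ρ.comp Monoid.Coprod.inr))) 1) + 1) ∧
    (ρ.comp Monoid.Coprod.inl = 1 ∨ ρ.comp Monoid.Coprod.inr = 1 →
      finrank ℂ (groupCohomology (Rep.of (charRep ρ)) 1) =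
        finrank ℂ (groupCohomology (Rep.of (charRep (ρ.comp Monoid.Coprod.inl))) 1) +
        finrank ℂ (groupCohomology (Rep.of (charRep (ρ.comp Monoid.Coprod.inr))) 1)) := by
  -- `res Coprod.inl (Rep.of (charRep ρ))` is `Rep.of (charRep (ρ.comp Coprod.inl))` only after
  -- unfolding `charRep`, hence the explicit types below.
  have hZ₁ : FiniteDimensional ℂ (cocycles₁ (res Coprod.inl (Rep.of (charRep ρ)))) :=
    finiteDimensional_cocycles₁ (Rep.of (charRep (ρ.comp Coprod.inl)))
  have hZ₂ : FiniteDimensional ℂ (cocycles₁ (res Coprod.inr (Rep.of (charRep ρ)))) :=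
    finiteDimensional_cocycles₁ (Rep.of (charRep (ρ.comp Coprod.inr)))
  have key : finrank ℂ (groupCohomology (Rep.of (charRep ρ)) 1) +
      finrank ℂ (coboundaries₁ (Rep.of (charRep ρ))) =
      (finrank ℂ (groupCohomology (Rep.of (charRep (ρ.comp Coprod.inl))) 1) +
        finrank ℂ (coboundaries₁ (Rep.of (charRep (ρ.comp Coprod.inl))))) +
      (finrank ℂ (groupCohomology (Rep.of (charRep (ρ.comp Coprod.inr))) 1) +
        finrank ℂ (coboundaries₁ (Rep.of (charRep (ρ.comp Coprod.inr))))) :=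
    finrank_H1_coprod_add_finrank_coboundaries₁ _
  have hρ : ρ = 1 ↔ ρ.comp Coprod.inl = 1 ∧ ρ.comp Coprod.inr = 1 := by
    simp [Coprod.hom_ext_iff]
  simp only [finrank_coboundaries₁_charRep] at key
  refine ⟨inferInstance, fun h => ?_, fun h => ?_⟩ <;> split_ifs at key <;> first | omega | tauto
end

section
/- Let Γ be a finite simple graph with vertex set V. Suppose that for every subset W ⊆ V such that the induced subgraph Γ(W) is disconnected and W is maximal among subsets with disconnected induced subgraph, the induced subgraph Γ(W) has no edges. Then Γ is a complete multipartite graph; equivalently, the relation on V given by 'u = v or u and v are non-adjacent' is an equivalence relation, and two vertices are adjacent precisely when they lie in different equivalence classes. -/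
/-!
If `u` and `w` are both non-adjacent to a third vertex `v`, then `{u, w, v}` is disconnected, so
it lies in a maximal disconnected set; by hypothesis that set has no edges, so `u` and `w` are
non-adjacent as well. Hence non-adjacency (together with equality) is an equivalence relation,
whose classes are the parts of a complete multipartite graph.
-/

/-- `W` induces a disconnected subgraph of `Γ`: it splits into two nonempty parts with no
edge of `Γ` between them. -/
def IsDisconnectedIn {V : Type*} (Γ : SimpleGraph V) (W : Set V) : Prop :=
  ∃ W₁ W₂ : Set V, W₁.Nonempty ∧ W₂.Nonempty ∧ Disjoint W₁ W₂ ∧ W₁ ∪ W₂ = W ∧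
    ∀ v ∈ W₁, ∀ w ∈ W₂, ¬ Γ.Adj v w

namespace SimpleGraph

variable {V : Type*} (Γ : SimpleGraph V)

lemma isDisconnectedIn_insert {W : Set V} {v : V} (hW : W.Nonempty) (hv : v ∉ W)
    (hadj : ∀ w ∈ W, ¬ Γ.Adj w v) : IsDisconnectedIn Γ (insert v W) :=
  ⟨W, {v}, hW, Set.singleton_nonempty v, Set.disjoint_singleton_right.mpr hv,
    Set.union_singleton, fun w hw _ hv' => hv' ▸ hadj w hw⟩

lemma not_adj_of_not_adj_of_not_adj [Finite V]
    (h : ∀ W, Maximal (IsDisconnectedIn Γ) W → ∀ v ∈ W, ∀ w ∈ W, ¬ Γ.Adj v w)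
    {u v w : V} (huv : ¬ Γ.Adj u v) (hvw : ¬ Γ.Adj v w) : ¬ Γ.Adj u w := by
  intro huw
  have hv : v ∉ ({u, w} : Set V) := by
    rintro (rfl | rfl)
    exacts [hvw huw, huv huw]
  have hdis : IsDisconnectedIn Γ (insert v {u, w}) := by
    refine Γ.isDisconnectedIn_insert (Set.insert_nonempty u {w}) hv ?_
    rintro x (rfl | rfl)
    exacts [huv, fun h => hvw h.symm]
  obtain ⟨W, hsub, hmax⟩ := Finite.exists_le_maximal hdis
  exact h W hmax u (hsub (by simp)) w (hsub (by simp)) huw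

lemma equivalence_eq_or_not_adj (htrans : ∀ ⦃u v w⦄, ¬ Γ.Adj u v → ¬ Γ.Adj v w → ¬ Γ.Adj u w) :
    Equivalence (fun u v : V => u = v ∨ ¬ Γ.Adj u v) where
  refl _ := Or.inl rfl
  symm
    | Or.inl huv => Or.inl huv.symm
    | Or.inr huv => Or.inr fun h => huv h.symm
  trans
    | Or.inl rfl, hvw => hvw
    | Or.inr huv, Or.inl rfl => Or.inr huv
    | Or.inr huv, Or.inr hvw => Or.inr (htrans huv hvw)

lemma adj_iff_not_eq_or_not_adj (u v : V) : Γ.Adj u v ↔ ¬ (u = v ∨ ¬ Γ.Adj u v) := by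
  rw [not_or, not_not, and_iff_right_of_imp Γ.ne_of_adj]

end SimpleGraph

/-- If every subset `W` of vertices which induces a disconnected subgraph of
`Γ`, and which is maximal with this property, induces a subgraph with no edges, then `Γ` is a
complete multipartite graph: the relation "`u = v` or `u`, `v` non-adjacent" is an equivalence
relation, and two vertices are adjacent exactly when they lie in different classes. -/
theorem stmt_7 {V : Type*} [Fintype V] (Γ : SimpleGraph V)
    (h : ∀ W : Set V, IsDisconnectedIn Γ W →
      (∀ W' : Set V, W ⊆ W' → IsDisconnectedIn Γ W' → W' = W) →
      ∀ v ∈ W, ∀ w ∈ W, ¬ Γ.Adj v w) :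
    Equivalence (fun u v : V => u = v ∨ ¬ Γ.Adj u v) ∧
    ∀ u v : V, Γ.Adj u v ↔ ¬ (u = v ∨ ¬ Γ.Adj u v) := by
  have hmax : ∀ W, Maximal (IsDisconnectedIn Γ) W → ∀ v ∈ W, ∀ w ∈ W, ¬ Γ.Adj v w :=
    fun W hW => h W hW.prop fun _ hsub hdis => hW.eq_of_superset hdis hsub
  exact ⟨Γ.equivalence_eq_or_not_adj fun _ _ _ => Γ.not_adj_of_not_adj_of_not_adj hmax,
    Γ.adj_iff_not_eq_or_not_adj⟩
end

section
/- Let Γ = (V, E) be a finite simple graph and G_Γ the associated right-angled Artin group. Let ρ : G_Γ → ℂ* be a nontrivial character, and let supp(ρ) = {v ∈ V : ρ(v) ≠ 1} (evaluating ρ on the images of the generators). Then H¹(G_Γ, ℂ_ρ) ≠ 0 if and only if there exists a subset W ⊆ V with supp(ρ) ⊆ W such that the induced subgraph Γ(W) is disconnected. Equivalently, the first characteristic variety V₁(G_Γ), away from the trivial character, is the union of the subtori T_W = {ρ : ρ(v) = 1 for all v ∉ W} over all W ⊆ V with Γ(W) disconnected. -/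
/-- The commutator relators of the right-angled Artin group of a graph `Γ`. -/
def raagRels {V : Type} (Γ : SimpleGraph V) : Set (FreeGroup V) :=
  {r | ∃ v w : V, Γ.Adj v w ∧
    r = FreeGroup.of v * FreeGroup.of w * (FreeGroup.of v)⁻¹ * (FreeGroup.of w)⁻¹}

/-- The right-angled Artin group of a finite simple graph `Γ`, presented with generating set
the vertices and relators the commutators of adjacent vertices. -/
abbrev RAAG {V : Type} (Γ : SimpleGraph V) : Type := PresentedGroup (raagRels Γ)

open groupCohomology

section VertexCocycle

variable {V K : Type*} [Field K] (Γ : SimpleGraph V) (t : V → K)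

def IsVertexCocycle (x : V → K) : Prop :=
  ∀ ⦃v w⦄, Γ.Adj v w → t v * x w = t w * x v

variable {Γ t}

theorem exists_isDisconnectedIn_of_isVertexCocycle {x : V → K} (hx : IsVertexCocycle Γ t x)
    (hxt : ∀ c : K, x ≠ c • t) {v₀ : V} (hv₀ : t v₀ ≠ 0) :
    ∃ W : Set V, {v | t v ≠ 0} ⊆ W ∧ IsDisconnectedIn Γ W := by
  set W₁ : Set V := {v | t v ≠ 0 ∧ x v * t v₀ = x v₀ * t v}
  set W₂ : Set V := {v | x v * t v₀ ≠ x v₀ * t v}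
  refine ⟨W₁ ∪ W₂, fun v hv => ?_, W₁, W₂, ⟨v₀, hv₀, rfl⟩, ?_, ?_, rfl, ?_⟩
  · by_cases h : x v * t v₀ = x v₀ * t v
    exacts [Or.inl ⟨hv, h⟩, Or.inr h]
  · by_contra hW₂
    refine hxt (x v₀ / t v₀) (funext fun v => ?_)
    have h : x v * t v₀ = x v₀ * t v := not_not.1 fun h => hW₂ ⟨v, h⟩
    simp only [Pi.smul_apply, smul_eq_mul]
    field_simp
    linear_combination h
  · exact Set.disjoint_left.2 fun v hv₁ hv₂ => hv₂ hv₁.2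
  · rintro v ⟨hv, hv₁⟩ w hw₂ hvw
    refine hw₂ (mul_left_cancel₀ hv ?_)
    linear_combination t v₀ * hx hvw + t w * hv₁

theorem exists_isVertexCocycle_ne_smul_of_eq_zero_on {U : Set V} (hU : U.Nonempty)
    (ht : ∀ v ∈ U, t v = 0) (hsep : ∀ v ∈ U, ∀ w, Γ.Adj v w → w ∉ U → t w = 0) :
    ∃ x : V → K, IsVertexCocycle Γ t x ∧ ∀ c : K, x ≠ c • t := by
  refine ⟨U.indicator 1, fun v w hvw => ?_, fun c h => ?_⟩
  · by_cases hv : v ∈ U <;> by_cases hw : w ∈ U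
    · simp [ht v hv, ht w hw]
    · simp [ht v hv, hsep v hv w hvw hw]
    · simp [ht w hw, hsep w hw v hvw.symm hv]
    · simp [hv, hw]
  · obtain ⟨u, hu⟩ := hU
    simpa [hu, ht u hu] using congrFun h u

theorem exists_isVertexCocycle_ne_smul_of_separates {U : Set V} {s₁ s₂ : V} (hs₁ : s₁ ∈ U)
    (hs₂ : s₂ ∉ U) (ht₁ : t s₁ ≠ 0) (ht₂ : t s₂ ≠ 0)
    (hsep : ∀ v ∈ U, ∀ w, Γ.Adj v w → w ∉ U → t w = 0) :
    ∃ x : V → K, IsVertexCocycle Γ t x ∧ ∀ c : K, x ≠ c • t := by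
  refine ⟨U.indicator t, fun v w hvw => ?_, fun c h => ?_⟩
  · by_cases hv : v ∈ U <;> by_cases hw : w ∈ U
    · simp [hv, hw, mul_comm]
    · simp [hv, hw, hsep v hv w hvw hw]
    · simp [hv, hw, hsep w hw v hvw.symm hv]
    · simp [hv, hw]
  · have h₁ := congrFun h s₁
    have h₂ := congrFun h s₂
    simp only [Set.indicator_of_mem hs₁, Set.indicator_of_notMem hs₂, Pi.smul_apply,
      smul_eq_mul] at h₁ h₂
    rw [(mul_eq_right₀ ht₁).1 h₁.symm, one_mul] at h₂
    exact ht₂ h₂.symm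

theorem eq_zero_of_adj_of_notMem {W₁ W₂ : Set V} (hW : {v | t v ≠ 0} ⊆ W₁ ∪ W₂)
    (hnadj : ∀ v ∈ W₁, ∀ w ∈ W₂, ¬ Γ.Adj v w) {v w : V} (hv : v ∈ W₁) (hvw : Γ.Adj v w)
    (hw : w ∉ W₁) : t w = 0 := by
  by_contra htw
  rcases hW htw with hw₁ | hw₂
  exacts [hw hw₁, hnadj v hv w hw₂ hvw]

theorem exists_isVertexCocycle_ne_smul_of_isDisconnectedIn {W : Set V}
    (hW : {v | t v ≠ 0} ⊆ W) (hdisc : IsDisconnectedIn Γ W) :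
    ∃ x : V → K, IsVertexCocycle Γ t x ∧ ∀ c : K, x ≠ c • t := by
  obtain ⟨W₁, W₂, hW₁, hW₂, hdisj, rfl, hnadj⟩ := hdisc
  have hsep₁ : ∀ v ∈ W₁, ∀ w, Γ.Adj v w → w ∉ W₁ → t w = 0 :=
    fun v hv w hvw hw => eq_zero_of_adj_of_notMem hW hnadj hv hvw hw
  have hsep₂ : ∀ v ∈ W₂, ∀ w, Γ.Adj v w → w ∉ W₂ → t w = 0 :=
    fun v hv w hvw hw => eq_zero_of_adj_of_notMem (Set.union_comm W₁ W₂ ▸ hW)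
      (fun v hv w hw hvw => hnadj w hw v hv hvw.symm) hv hvw hw
  by_cases ht₁ : ∀ v ∈ W₁, t v = 0
  · exact exists_isVertexCocycle_ne_smul_of_eq_zero_on hW₁ ht₁ hsep₁
  by_cases ht₂ : ∀ v ∈ W₂, t v = 0
  · exact exists_isVertexCocycle_ne_smul_of_eq_zero_on hW₂ ht₂ hsep₂
  push Not at ht₁ ht₂
  obtain ⟨s₁, hs₁, hts₁⟩ := ht₁
  obtain ⟨s₂, hs₂, hts₂⟩ := ht₂
  exact exists_isVertexCocycle_ne_smul_of_separates hs₁ (Set.disjoint_right.1 hdisj hs₂)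
    hts₁ hts₂ hsep₁

end VertexCocycle

section Cohomology

universe u

theorem groupCohomology.nontrivial_H1_iff {k G : Type u} [CommRing k] [Group G] (A : Rep k G) :
    Nontrivial (H1 A) ↔ ∃ f : cocycles₁ A, ⇑f ∉ coboundaries₁ A := by
  rw [nontrivial_iff_exists_ne 0]
  constructor
  · rintro ⟨y, hy⟩
    revert hy
    exact H1_induction_on y fun f hf => ⟨f, mt (H1π_eq_zero_iff f).2 hf⟩
  · rintro ⟨f, hf⟩
    exact ⟨H1π A f, mt (H1π_eq_zero_iff f).1 hf⟩

theorem groupCohomology.cocycles₁_ext_of_closure_eq_top {k G : Type u} [CommRing k] [Group G]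
    {A : Rep k G} {s : Set G} (hs : Subgroup.closure s = ⊤) {f₁ f₂ : cocycles₁ A}
    (h : ∀ g ∈ s, f₁ g = f₂ g) : f₁ = f₂ := by
  ext g
  have hg : g ∈ Subgroup.closure s := hs ▸ Subgroup.mem_top g
  induction hg using Subgroup.closure_induction with
  | mem g hg => exact h g hg
  | one => simp
  | mul g g' _ _ hg hg' =>
    rw [(mem_cocycles₁_iff ⇑f₁).1 f₁.2, (mem_cocycles₁_iff ⇑f₂).1 f₂.2, hg, hg']
  | inv g _ hg =>
    have h := cocycles₁_map_inv f₁ g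
    rw [hg, ← cocycles₁_map_inv f₂ g] at h
    simpa only [Representation.inv_self_apply] using congrArg (A.ρ g⁻¹) h

variable {G : Type} [Group G] (ρ : G →* ℂˣ)

theorem mem_cocycles₁_charRep_iff (f : G → ℂ) :
    f ∈ cocycles₁ (Rep.of (charRep ρ)) ↔ ∀ g h, f (g * h) = ρ g * f h + f g := by
  rw [mem_cocycles₁_iff]
  rfl

theorem mem_coboundaries₁_charRep_iff (f : G → ℂ) :
    f ∈ coboundaries₁ (Rep.of (charRep ρ)) ↔ ∃ a : ℂ, ∀ g, f g = (ρ g - 1) * a := by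
  constructor
  · rintro ⟨a, rfl⟩
    refine ⟨a, fun g => ?_⟩
    rw [d₀₁_hom_apply]
    show ρ g * a - a = _
    ring
  · rintro ⟨a, ha⟩
    refine ⟨a, funext fun g => ?_⟩
    rw [d₀₁_hom_apply, ha]
    show ρ g * a - a = _
    ring

/-- `Multiplicative ℂ ⋊[scalingAut] ℂˣ` is the affine group of `ℂ`. -/
noncomputable abbrev scalingAut : ℂˣ →* MulAut (Multiplicative ℂ) :=
  (MulAutMultiplicative ℂ).symm.toMonoidHom.comp (DistribMulAction.toAddAut ℂˣ ℂ)

theorem mem_cocycles₁_charRep_of_rightHom_comp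
    (Ψ : G →* Multiplicative ℂ ⋊[scalingAut] ℂˣ) (hΨ : SemidirectProduct.rightHom.comp Ψ = ρ) :
    (fun g => (Ψ g).left.toAdd) ∈ cocycles₁ (Rep.of (charRep ρ)) := by
  rw [mem_cocycles₁_charRep_iff]
  intro g h
  have hρg : ρ g = (Ψ g).right := by rw [← hΨ]; rfl
  rw [map_mul, SemidirectProduct.mul_left, toAdd_mul, hρg, add_comm]
  rfl

end Cohomology

namespace RAAG

variable {V : Type} {Γ : SimpleGraph V}

theorem of_mul_of_comm {v w : V} (h : Γ.Adj v w) :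
    (PresentedGroup.of v : RAAG Γ) * .of w = .of w * .of v := by
  have := PresentedGroup.mk_eq_mk_of_mul_inv_mem (rels := raagRels Γ)
    (x := .of v * .of w) (y := .of w * .of v) ⟨v, w, h, by group⟩
  simpa [PresentedGroup.of] using this

def genCoboundary (ρ : RAAG Γ →* ℂˣ) (v : V) : ℂ :=
  ρ (.of v) - 1

variable (ρ : RAAG Γ →* ℂˣ)

theorem isVertexCocycle_of_cocycles₁ (f : cocycles₁ (Rep.of (charRep ρ))) :
    IsVertexCocycle Γ (genCoboundary ρ) fun v => f (.of v) := by
  intro v w hvw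
  have hf := (mem_cocycles₁_charRep_iff ρ f).1 f.2
  have := hf (.of v) (.of w)
  rw [of_mul_of_comm hvw, hf] at this
  simp only [genCoboundary]
  linear_combination this.symm

theorem exists_cocycles₁_of_isVertexCocycle {x : V → ℂ}
    (hx : IsVertexCocycle Γ (genCoboundary ρ) x) :
    ∃ f : cocycles₁ (Rep.of (charRep ρ)), ∀ v, f (.of v) = x v := by
  let ψ : V → Multiplicative ℂ ⋊[scalingAut] ℂˣ := fun v => ⟨.ofAdd (x v), ρ (.of v)⟩
  have hψ : ∀ r ∈ raagRels Γ, FreeGroup.lift ψ r = 1 := by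
    rintro r ⟨v, w, hvw, rfl⟩
    have hcomm : ψ v * ψ w = ψ w * ψ v := by
      ext
      · have h := hx hvw
        simp only [genCoboundary] at h
        show x v + ρ (.of v) * x w = x w + ρ (.of w) * x v
        linear_combination h
      · exact mul_comm _ _
    simp only [map_mul, map_inv, FreeGroup.lift_apply_of, hcomm]
    group
  let Ψ := PresentedGroup.toGroup hψ
  have hΨ : SemidirectProduct.rightHom.comp Ψ = ρ :=
    PresentedGroup.ext fun v => by simp [Ψ, ψ, PresentedGroup.toGroup.of]
  refine ⟨⟨_, mem_cocycles₁_charRep_of_rightHom_comp ρ Ψ hΨ⟩, fun v => ?_⟩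
  show (Ψ (.of v)).left.toAdd = x v
  rw [PresentedGroup.toGroup.of]
  rfl

theorem nontrivial_H1_charRep_iff :
    Nontrivial (groupCohomology (Rep.of (charRep ρ)) 1) ↔
      ∃ x : V → ℂ, IsVertexCocycle Γ (genCoboundary ρ) x ∧ ∀ c : ℂ, x ≠ c • genCoboundary ρ := by
  rw [nontrivial_H1_iff]
  constructor
  · rintro ⟨f, hf⟩
    refine ⟨_, isVertexCocycle_of_cocycles₁ ρ f, fun c hc => hf ?_⟩
    have hb : (fun g => (ρ g - 1) * c) ∈ coboundaries₁ (Rep.of (charRep ρ)) :=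
      (mem_coboundaries₁_charRep_iff ρ _).2 ⟨c, fun _ => rfl⟩
    have hfb : f = ⟨_, coboundaries₁_le_cocycles₁ _ hb⟩ := by
      refine cocycles₁_ext_of_closure_eq_top (PresentedGroup.closure_range_of _) ?_
      rintro _ ⟨v, rfl⟩
      have hv := congrFun hc v
      simp only [Pi.smul_apply, smul_eq_mul, genCoboundary] at hv
      exact hv.trans (mul_comm _ _)
    rwa [hfb]
  · rintro ⟨x, hx, hxc⟩
    obtain ⟨f, hf⟩ := exists_cocycles₁_of_isVertexCocycle ρ hx
    refine ⟨f, fun hcob => ?_⟩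
    obtain ⟨c, hc⟩ := (mem_coboundaries₁_charRep_iff ρ f).1 hcob
    refine hxc c (funext fun v => ?_)
    rw [← hf v, hc, Pi.smul_apply, genCoboundary, smul_eq_mul, mul_comm]

end RAAG

theorem stmt_8_general {V : Type} (Γ : SimpleGraph V)
    (ρ : RAAG Γ →* ℂˣ) (hρ : ρ ≠ 1) :
    Nontrivial (groupCohomology (Rep.of (charRep ρ)) 1) ↔
      ∃ W : Set V, {v : V | ρ (PresentedGroup.of v) ≠ 1} ⊆ W ∧ IsDisconnectedIn Γ W := by
  have hsupp : {v : V | ρ (PresentedGroup.of v) ≠ 1} = {v | RAAG.genCoboundary ρ v ≠ 0} := by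
    simp [RAAG.genCoboundary, sub_eq_zero]
  obtain ⟨v₀, hv₀⟩ : ∃ v, RAAG.genCoboundary ρ v ≠ 0 := by
    by_contra! h
    exact hρ (PresentedGroup.ext fun v => Units.ext (sub_eq_zero.1 (h v)))
  rw [RAAG.nontrivial_H1_charRep_iff, hsupp]
  constructor
  · rintro ⟨x, hx, hxt⟩
    exact exists_isDisconnectedIn_of_isVertexCocycle hx hxt hv₀
  · rintro ⟨W, hW, hdisc⟩
    exact exists_isVertexCocycle_ne_smul_of_isDisconnectedIn hW hdisc

/-- For a nontrivial character `ρ` of the right-angled Artin group `G_Γ` with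
support `supp(ρ) = {v : ρ(v) ≠ 1}`, the twisted cohomology `H¹(G_Γ, ℂ_ρ)` is nonzero if and
only if there is `W ⊇ supp(ρ)` inducing a disconnected subgraph of `Γ`; i.e. `V₁(G_Γ)` away
from `1` is the union of the subtori `T_W` over all `W` with `Γ(W)` disconnected. -/
theorem stmt_8 {V : Type} [Fintype V] (Γ : SimpleGraph V)
    (ρ : RAAG Γ →* ℂˣ) (hρ : ρ ≠ 1) :
    Nontrivial (groupCohomology (Rep.of (charRep ρ)) 1) ↔
      ∃ W : Set V, {v : V | ρ (PresentedGroup.of v) ≠ 1} ⊆ W ∧ IsDisconnectedIn Γ W :=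
  stmt_8_general Γ ρ hρ
end

section
/- Let Γ = (V, E) be a finite complete multipartite graph, i.e., V admits a partition into nonempty subsets V₁, …, V_r such that two vertices are adjacent if and only if they lie in different parts. Then the right-angled Artin group G_Γ is isomorphic to the direct product of free groups FreeGroup(V₁) × ⋯ × FreeGroup(V_r). -/
/-!
When adjacency means "different colour" for a colouring `c : V → ι`, the defining relations of
`G_Γ` say exactly that generators of different colours commute, while generators of the same
colour are unrelated. Sending `v` to its generator in the `c v`-th factor therefore respects the
relations, and the free groups on the colour classes map back into `G_Γ` with pairwise commuting
images, so they assemble into a homomorphism on the product. The two maps are inverse on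
generators.
-/

theorem FreeGroup.commute_lift_lift {α β G : Type*} [Group G] {f : α → G} {g : β → G}
    (h : ∀ a b, Commute (f a) (g b)) (x : FreeGroup α) (y : FreeGroup β) :
    Commute (FreeGroup.lift f x) (FreeGroup.lift g y) := by
  have hg : (FreeGroup.lift g).range ≤ Subgroup.centralizer (Set.range f) :=
    FreeGroup.range_lift_le <| by
      rintro _ ⟨b, rfl⟩ _ ⟨a, rfl⟩
      exact h a b
  have hf : (FreeGroup.lift f).range ≤ Subgroup.centralizer (FreeGroup.lift g).range :=
    FreeGroup.range_lift_le fun _ ha _ hy => (hg hy _ ha).symm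
  exact (hf ⟨x, rfl⟩ _ ⟨y, rfl⟩).symm

namespace RAAG

variable {V : Type} {Γ : SimpleGraph V}

theorem commute_of_of_adj {v w : V} (h : Γ.Adj v w) :
    Commute (PresentedGroup.of (rels := raagRels Γ) v) (PresentedGroup.of w) := by
  rw [← commutatorElement_eq_one_iff_commute, commutatorElement_def]
  exact PresentedGroup.one_of_mem ⟨v, w, h, rfl⟩

section CompleteMultipartite

variable {ι : Type*} (c : V → ι)

def ofColorClass (i : ι) : FreeGroup {v // c v = i} →* RAAG Γ :=
  FreeGroup.lift fun v => PresentedGroup.of v.1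

theorem pairwise_commute_ofColorClass (hadj : ∀ u v, c u ≠ c v → Γ.Adj u v) :
    Pairwise fun i j => ∀ x y, Commute (ofColorClass (Γ := Γ) c i x) (ofColorClass c j y) :=
  fun i j hij => FreeGroup.commute_lift_lift fun v w =>
    commute_of_of_adj (hadj v w (by rw [v.2, w.2]; exact hij))

variable [DecidableEq ι]

def toPiFreeGroup (hadj : ∀ u v, Γ.Adj u v → c u ≠ c v) :
    RAAG Γ →* ((i : ι) → FreeGroup {v // c v = i}) :=
  PresentedGroup.toGroup (f := fun v => Pi.mulSingle (c v) (FreeGroup.of ⟨v, rfl⟩)) <| by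
    rintro _ ⟨v, w, hvw, rfl⟩
    have hcomm := Pi.mulSingle_commute (f := fun i => FreeGroup {u // c u = i}) (hadj v w hvw)
      (FreeGroup.of (⟨v, rfl⟩ : {u // c u = c v})) (FreeGroup.of (⟨w, rfl⟩ : {u // c u = c w}))
    simp only [map_mul, map_inv, FreeGroup.lift_apply_of, hcomm.eq, mul_inv_cancel_right,
      mul_inv_cancel]

theorem toPiFreeGroup_of (hadj : ∀ u v, Γ.Adj u v → c u ≠ c v) (v : V) :
    toPiFreeGroup c hadj (PresentedGroup.of v) = Pi.mulSingle (c v) (FreeGroup.of ⟨v, rfl⟩) :=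
  PresentedGroup.toGroup.of _

theorem toPiFreeGroup_comp_ofColorClass (hadj : ∀ u v, Γ.Adj u v → c u ≠ c v) (i : ι) :
    (toPiFreeGroup c hadj).comp (ofColorClass c i) =
      MonoidHom.mulSingle (fun j => FreeGroup {v // c v = j}) i := by
  ext ⟨v, rfl⟩
  simp [ofColorClass, toPiFreeGroup_of]

variable [Fintype ι]

def ofPiFreeGroup (hadj : ∀ u v, c u ≠ c v → Γ.Adj u v) :
    ((i : ι) → FreeGroup {v // c v = i}) →* RAAG Γ :=
  MonoidHom.noncommPiCoprod (ofColorClass c) (pairwise_commute_ofColorClass c hadj)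

theorem ofPiFreeGroup_mulSingle (hadj : ∀ u v, c u ≠ c v → Γ.Adj u v) (i : ι)
    (x : FreeGroup {v // c v = i}) :
    ofPiFreeGroup c hadj (Pi.mulSingle i x) = ofColorClass c i x :=
  MonoidHom.noncommPiCoprod_mulSingle _ _ _

def mulEquivPiFreeGroup (hadj : ∀ u v, Γ.Adj u v ↔ c u ≠ c v) :
    RAAG Γ ≃* ((i : ι) → FreeGroup {v // c v = i}) :=
  MonoidHom.toMulEquiv (toPiFreeGroup c fun u v => (hadj u v).mp)
    (ofPiFreeGroup c fun u v => (hadj u v).mpr)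
    (PresentedGroup.ext fun v => by
      simp [toPiFreeGroup_of, ofPiFreeGroup_mulSingle, ofColorClass])
    (MonoidHom.pi_ext fun i x => by
      rw [MonoidHom.comp_apply, ofPiFreeGroup_mulSingle, ← MonoidHom.comp_apply,
        toPiFreeGroup_comp_ofColorClass]
      rfl)

end CompleteMultipartite

end RAAG

theorem stmt_11_general {V : Type} (Γ : SimpleGraph V) (r : ℕ)
    (c : V → Fin r)
    (hadj : ∀ u v : V, Γ.Adj u v ↔ c u ≠ c v) :
    Nonempty (RAAG Γ ≃* ((i : Fin r) → FreeGroup {v : V // c v = i})) :=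
  ⟨RAAG.mulEquivPiFreeGroup c hadj⟩

/-- If `Γ` is a finite complete multipartite graph, with parts the fibers of
a surjection `c : V → Fin r` and two vertices adjacent iff they lie in different parts, then
the right-angled Artin group `G_Γ` is isomorphic to the direct product of the free groups on
the parts: `G_Γ ≅ FreeGroup(V₁) × ⋯ × FreeGroup(V_r)`. -/
theorem stmt_11 {V : Type} [Fintype V] (Γ : SimpleGraph V) (r : ℕ)
    (c : V → Fin r) (hc : Function.Surjective c)
    (hadj : ∀ u v : V, Γ.Adj u v ↔ c u ≠ c v) :
    Nonempty (RAAG Γ ≃* ((i : Fin r) → FreeGroup {v : V // c v = i})) :=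
  stmt_11_general Γ r c hadj
end

section
/- For h ≥ 1, let P_h be the one-relator group with presentation ⟨x₁, …, x_h | x₁² x₂² ⋯ x_h² ⟩ (the fundamental group of the non-orientable surface N_h of genus h). If there exists a surjective group homomorphism from P_h onto a free group of rank r with r ≥ 2, then h ≥ 4. In particular, there is no epimorphism from ⟨a, b, c | a²b²c²⟩ onto the free group of rank 2. -/
/-!
A surjection `P_h → F_r` induces an injection `H¹(F_r; 𝔽₂) ↪ H¹(P_h; 𝔽₂) = 𝔽₂^h`. On `𝔽₂^h` the
cup-product pairing is the dot product, and it vanishes on the image because it is pulled back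
from the free group, where cup products vanish. An isotropic subspace of a nondegenerate form on
`𝔽₂^h` has dimension at most `h / 2`, so `2 r ≤ h`.

In matrix terms: let `U` be the `r × h` matrix whose columns are the mod-2 abelianized images of
the generators `xᵢ`. Surjectivity gives `rank U = r`, and lifting to a mod-2 Heisenberg group turns
the relator `x₁² ⋯ x_h²` into `U Uᵀ = 0`.
-/

/-- The relator `x₁² x₂² ⋯ x_h²` of the non-orientable surface of genus `h`. -/
def nonorientableRel (h : ℕ) : FreeGroup (Fin h) :=
  (List.ofFn fun i : Fin h => (FreeGroup.of i) ^ 2).prod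

/-- The fundamental group `P_h = ⟨x₁, …, x_h | x₁² x₂² ⋯ x_h²⟩` of the non-orientable
surface `N_h` of genus `h`. -/
abbrev NonorientableSurfaceGroup (h : ℕ) : Type :=
  PresentedGroup ({nonorientableRel h} : Set (FreeGroup (Fin h)))

open Matrix

/-- The central extension of `ι → R` by `Matrix ι ι R` with cocycle `(v, w) ↦ v wᵀ`. In
characteristic `2` the square of `(v, M)` is `(0, v vᵀ)`, so squares detect the mod-2 cup product. -/
@[ext]
structure Heisenberg (R ι : Type*) where
  vec : ι → R
  mat : Matrix ι ι R

namespace Heisenberg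

variable {R ι : Type*} [Ring R]

instance : One (Heisenberg R ι) := ⟨⟨0, 0⟩⟩

instance : Mul (Heisenberg R ι) :=
  ⟨fun x y => ⟨x.vec + y.vec, x.mat + y.mat + vecMulVec x.vec y.vec⟩⟩

instance : Inv (Heisenberg R ι) := ⟨fun x => ⟨-x.vec, -x.mat + vecMulVec x.vec x.vec⟩⟩

@[simp] lemma one_vec : (1 : Heisenberg R ι).vec = 0 := rfl
@[simp] lemma one_mat : (1 : Heisenberg R ι).mat = 0 := rfl
@[simp] lemma mul_vec (x y : Heisenberg R ι) : (x * y).vec = x.vec + y.vec := rfl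
@[simp] lemma mul_mat (x y : Heisenberg R ι) :
    (x * y).mat = x.mat + y.mat + vecMulVec x.vec y.vec := rfl
@[simp] lemma inv_vec (x : Heisenberg R ι) : x⁻¹.vec = -x.vec := rfl
@[simp] lemma inv_mat (x : Heisenberg R ι) : x⁻¹.mat = -x.mat + vecMulVec x.vec x.vec := rfl

instance : Group (Heisenberg R ι) where
  mul_assoc x y z := by
    ext : 1
    · simp [add_assoc]
    · simp only [mul_mat, mul_vec, add_vecMulVec, vecMulVec_add]; abel
  one_mul x := by ext : 1 <;> simp
  mul_one x := by ext : 1 <;> simp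
  inv_mul_cancel x := by ext : 1 <;> simp [neg_vecMulVec]

def vecHom : Heisenberg R ι →* Multiplicative (ι → R) where
  toFun x := .ofAdd x.vec
  map_one' := rfl
  map_mul' _ _ := rfl

def ofMat : Multiplicative (Matrix ι ι R) →* Heisenberg R ι where
  toFun M := ⟨0, M.toAdd⟩
  map_one' := rfl
  map_mul' _ _ := by ext : 1 <;> simp

lemma ofMat_injective : Function.Injective (ofMat : Multiplicative (Matrix ι ι R) →* _) :=
  fun _ _ h => congrArg mat h

lemma sq_eq_ofMat [CharP R 2] (x : Heisenberg R ι) :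
    x ^ 2 = ofMat (.ofAdd (vecMulVec x.vec x.vec)) := by
  ext <;> simp [pow_two, ofMat, CharTwo.add_self_eq_zero]

end Heisenberg

namespace FreeGroup

variable {ι κ : Type*} [DecidableEq ι] [DecidableEq κ]

variable (ι) in
def abelModTwo : FreeGroup ι →* Multiplicative (ι → ZMod 2) :=
  lift fun j => .ofAdd (Pi.single j 1)

lemma sum_vecMulVec_abelModTwo_eq_zero {n : ℕ} (g : Fin n → FreeGroup ι)
    (hg : (List.ofFn fun i => g i ^ 2).prod = 1) :
    ∑ i, vecMulVec (abelModTwo ι (g i)).toAdd (abelModTwo ι (g i)).toAdd = 0 := by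
  set v : Fin n → ι → ZMod 2 := fun i => (abelModTwo ι (g i)).toAdd
  let Ψ : FreeGroup ι →* Heisenberg (ZMod 2) ι := lift fun j => ⟨Pi.single j 1, 0⟩
  have hΨ : Heisenberg.vecHom.comp Ψ = abelModTwo ι := ext_hom _ _ fun j => by
    simp [Ψ, abelModTwo, Heisenberg.vecHom]
  have hsq (i : Fin n) : Ψ (g i) ^ 2 = Heisenberg.ofMat (.ofAdd (vecMulVec (v i) (v i))) := by
    rw [Heisenberg.sq_eq_ofMat,
      show (Ψ (g i)).vec = v i from congrArg Multiplicative.toAdd (DFunLike.congr_fun hΨ (g i))]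
  apply Multiplicative.ofAdd.injective
  apply Heisenberg.ofMat_injective
  calc Heisenberg.ofMat (.ofAdd (∑ i, vecMulVec (v i) (v i)))
      = (List.ofFn fun i => Heisenberg.ofMat (.ofAdd (vecMulVec (v i) (v i)))).prod := by
        rw [ofAdd_sum, ← List.prod_ofFn, _root_.map_list_prod, List.map_ofFn]; rfl
    _ = Ψ (List.ofFn fun i => g i ^ 2).prod := by
        simp only [← hsq, _root_.map_list_prod, List.map_ofFn, Function.comp_def, map_pow]
    _ = Heisenberg.ofMat (.ofAdd 0) := by rw [hg, ofAdd_zero, _root_.map_one, _root_.map_one]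

def abelModTwoMatrix [Fintype ι] (F : FreeGroup ι →* FreeGroup κ) : Matrix κ ι (ZMod 2) :=
  Matrix.of fun j i => (abelModTwo κ (F (of i))).toAdd j

lemma abelModTwoMatrix_mulVec [Fintype ι] (F : FreeGroup ι →* FreeGroup κ) (w : FreeGroup ι) :
    abelModTwoMatrix F *ᵥ (abelModTwo ι w).toAdd = (abelModTwo κ (F w)).toAdd := by
  let L := (abelModTwoMatrix F).mulVecLin.toAddMonoidHom.toMultiplicative
  have hL : L.comp (abelModTwo ι) = (abelModTwo κ).comp F := ext_hom _ _ fun i => by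
    ext j
    simp [L, abelModTwo, abelModTwoMatrix]
  exact congrArg Multiplicative.toAdd (DFunLike.congr_fun hL w)

lemma rank_abelModTwoMatrix_of_surjective [Fintype ι] [Fintype κ] {F : FreeGroup ι →* FreeGroup κ}
    (hF : Function.Surjective F) : (abelModTwoMatrix F).rank = Fintype.card κ := by
  have hrange : LinearMap.range (abelModTwoMatrix F).mulVecLin = ⊤ := by
    rw [eq_top_iff, ← (Pi.basisFun (ZMod 2) κ).span_eq, Submodule.span_le]
    rintro _ ⟨j, rfl⟩
    obtain ⟨w, hw⟩ := hF (of j)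
    refine ⟨(abelModTwo ι w).toAdd, ?_⟩
    rw [mulVecLin_apply, abelModTwoMatrix_mulVec, hw, Pi.basisFun_apply]
    simp [abelModTwo]
  rw [rank, hrange, finrank_top, Module.finrank_fintype_fun_eq_card]

lemma abelModTwoMatrix_mul_transpose {n : ℕ} {F : FreeGroup (Fin n) →* FreeGroup κ}
    (hF : F (nonorientableRel n) = 1) :
    abelModTwoMatrix F * (abelModTwoMatrix F)ᵀ = 0 := by
  rw [← sum_vecMulVec_abelModTwo_eq_zero (fun i => F (of i))]
  · ext j k
    simp [mul_apply, vecMulVec_apply, Matrix.sum_apply, abelModTwoMatrix]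
  · simpa [nonorientableRel, _root_.map_list_prod, List.map_ofFn, Function.comp_def] using hF

end FreeGroup

theorem Matrix.two_mul_rank_le_of_mul_transpose_eq_zero {K m n : Type*} [Field K] [Fintype m]
    [Fintype n] {A : Matrix m n K} (hA : A * Aᵀ = 0) : 2 * A.rank ≤ Fintype.card n := by
  have hle : LinearMap.range Aᵀ.mulVecLin ≤ LinearMap.ker A.mulVecLin := by
    rintro _ ⟨x, rfl⟩
    rw [LinearMap.mem_ker, mulVecLin_apply, mulVecLin_apply, mulVec_mulVec, hA, zero_mulVec]
  have hrank_nullity := LinearMap.finrank_range_add_finrank_ker A.mulVecLin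
  rw [Module.finrank_fintype_fun_eq_card] at hrank_nullity
  have hfinrank := Submodule.finrank_mono hle
  have htranspose := rank_transpose A
  rw [rank, rank] at htranspose
  rw [rank]
  omega

theorem NonorientableSurfaceGroup.two_mul_le_of_surjective {h r : ℕ}
    {f : NonorientableSurfaceGroup h →* FreeGroup (Fin r)} (hf : Function.Surjective f) :
    2 * r ≤ h := by
  let F := f.comp (PresentedGroup.mk _)
  have hFrel : F (nonorientableRel h) = 1 := by
    simp [F, PresentedGroup.one_of_mem (Set.mem_singleton _)]
  have hFsurj : Function.Surjective F := hf.comp (PresentedGroup.mk_surjective _)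
  simpa [FreeGroup.rank_abelModTwoMatrix_of_surjective hFsurj] using
    two_mul_rank_le_of_mul_transpose_eq_zero (FreeGroup.abelModTwoMatrix_mul_transpose hFrel)

/-- For `h ≥ 1`, if there is an epimorphism from
`P_h = ⟨x₁, …, x_h | x₁²⋯x_h²⟩` onto a free group of rank `r ≥ 2`, then `h ≥ 4`.
In particular there is no epimorphism from `⟨a, b, c | a²b²c²⟩` onto the free group
of rank `2`. -/
theorem stmt_12 :
    (∀ h r : ℕ, 1 ≤ h → 2 ≤ r →
      (∃ f : NonorientableSurfaceGroup h →* FreeGroup (Fin r), Function.Surjective f) →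
      4 ≤ h) ∧
    ¬ ∃ f : NonorientableSurfaceGroup 3 →* FreeGroup (Fin 2), Function.Surjective f := by
  refine ⟨fun h r _ hr ⟨f, hf⟩ => ?_, fun ⟨f, hf⟩ => ?_⟩ <;>
    linarith [NonorientableSurfaceGroup.two_mul_le_of_surjective hf]
end

section
/- Let A be a finitely generated abelian group, R = ℂ[A] its group algebra over ℂ, ε : R → ℂ the augmentation homomorphism (induced by the trivial character), and ρ : A → ℂ* a character with ρ ≠ 1, inducing the ring homomorphism R → ℂ. Let ℂ_ρ and ℂ_ε denote ℂ viewed as an R-module via ρ and via ε respectively. Then Tor_n^R(ℂ_ρ, ℂ_ε) = 0 for all n ≥ 0. -/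
/-!
Pick `a` with `ρ a ≠ 1` and put `r = [a] - 1 ∈ ℂ[A]`. Multiplication by `r` is the nonzero
scalar `ρ a - 1` on `ℂ_ρ` and zero on `ℂ_ε`. Since `ℂ[A]` is commutative, the tensor product over
it is balanced, so `r` acting on the first argument of `Tor_n` induces the same endomorphism as
`r` acting on the second one. That endomorphism of `Tor_n(ℂ_ρ, ℂ_ε)` is thus both an isomorphism
and zero, hence `Tor_n(ℂ_ρ, ℂ_ε) = 0`.
-/

open CategoryTheory

/-- `ℂ` as a module over the group algebra `ℂ[A]`, via a ring homomorphism
`ℂ[A] → ℂ` (e.g. the one induced by a character of `A` or the augmentation). -/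
noncomputable def charModule (A : Type) [CommGroup A]
    (f : MonoidAlgebra ℂ A →+* ℂ) : ModuleCat (MonoidAlgebra ℂ A) :=
  letI : Module (MonoidAlgebra ℂ A) ℂ := Module.compHom ℂ f
  ModuleCat.of (MonoidAlgebra ℂ A) ℂ

open Limits MonoidalCategory

namespace CategoryTheory

lemma Functor.leftDerived_map_zero {C D : Type*} [Category* C] [Category* D] [Abelian C]
    [HasProjectiveResolutions C] [Abelian D] (F : C ⥤ D) [F.Additive] (n : ℕ) (X Y : C) :
    (F.leftDerived n).map (0 : X ⟶ Y) = 0 := by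
  rw [F.leftDerived_map_eq n 0 (P := projectiveResolution X) (Q := projectiveResolution Y) 0
    (by simp), Functor.map_zero, zero_comp, comp_zero]

variable {R : Type*} [CommRing R] {C : Type*} [Category* C] [MonoidalCategory C] [Abelian C]
  [MonoidalPreadditive C] [Linear R C] [MonoidalLinear R C] [HasProjectiveResolutions C]

lemma Tor_map_smul_id_app (r : R) (X Y : C) (n : ℕ) :
    ((Tor C n).map (r • 𝟙 X)).app Y = ((Tor C n).obj X).map (r • 𝟙 Y) := by
  let P := projectiveResolution Y
  have lift : (r • 𝟙 P.complex).f 0 ≫ P.π.f 0 = P.π.f 0 ≫ (r • 𝟙 Y) := by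
    -- stated for an arbitrary `f`: the target of `P.π.f 0` is only definitionally `Y`
    have smul_id_comm {A B : C} (f : A ⟶ B) : (r • 𝟙 A) ≫ f = f ≫ (r • 𝟙 B) := by simp
    exact smul_id_comm (P.π.f 0)
  have balanced : (NatTrans.mapHomologicalComplex ((tensoringLeft C).map (r • 𝟙 X)) _).app
      P.complex = (((tensoringLeft C).obj X).mapHomologicalComplex _).map (r • 𝟙 P.complex) := by
    ext i
    simp only [NatTrans.mapHomologicalComplex_app_f, curriedTensor_map_app,
      MonoidalLinear.smul_whiskerRight, id_whiskerRight, Functor.map_smul, Functor.map_id,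
      HomologicalComplex.smul_f_apply, HomologicalComplex.id_f]
    rfl
  show (NatTrans.leftDerived _ n).app Y = (Functor.leftDerived _ n).map _
  rw [← cancel_mono (P.isoLeftDerivedObj _ n).hom,
    ProjectiveResolution.isoLeftDerivedObj_hom_naturality _ P P _ lift,
    ProjectiveResolution.leftDerived_app_eq _ P, balanced, Category.assoc, Category.assoc,
    Iso.inv_hom_id, Category.comp_id]
  rfl

lemma isZero_Tor_of_smul (r : R) {X Y : C} [IsIso (r • 𝟙 X)] (hY : r • 𝟙 Y = 0) (n : ℕ) :
    IsZero (((Tor C n).obj X).obj Y) :=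
  IsZero.of_mono_eq_zero ((Tor C n).map (r • 𝟙 X) |>.app Y) <| by
    rw [Tor_map_smul_id_app, hY]
    exact Functor.leftDerived_map_zero _ n Y Y

end CategoryTheory

namespace charModule

variable {A : Type} [CommGroup A] (f : MonoidAlgebra ℂ A →+* ℂ) (r : MonoidAlgebra ℂ A)

lemma smul_id_apply (x : ℂ) : (r • 𝟙 (charModule A f)).hom x = f r * x := rfl

lemma smul_id_eq_zero (h : f r = 0) : r • 𝟙 (charModule A f) = 0 := by
  ext x
  exact (smul_id_apply f r x).trans (by rw [h]; exact zero_mul (M₀ := ℂ) x)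

lemma isIso_smul_id (h : f r ≠ 0) : IsIso (r • 𝟙 (charModule A f)) := by
  rw [ConcreteCategory.isIso_iff_bijective]
  exact (Equiv.mulLeft₀ (f r) h).bijective

end charModule

theorem stmt_13_general (A : Type) [CommGroup A]
    (ρ : A →* ℂˣ) (hρ : ρ ≠ 1) (n : ℕ) :
    Subsingleton
      (((Tor (ModuleCat (MonoidAlgebra ℂ A)) n).obj
          (charModule A (MonoidAlgebra.lift ℂ ℂ A ((Units.coeHom ℂ).comp ρ)).toRingHom)).obj
        (charModule A (MonoidAlgebra.lift ℂ ℂ A (1 : A →* ℂ)).toRingHom)) := by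
  obtain ⟨a, ha⟩ : ∃ a, ρ a ≠ 1 := by
    by_contra! h
    exact hρ (MonoidHom.ext h)
  let r := MonoidAlgebra.of ℂ A a - 1
  have hρr : MonoidAlgebra.lift ℂ ℂ A ((Units.coeHom ℂ).comp ρ) r ≠ 0 := by
    rw [map_sub, map_one, MonoidAlgebra.lift_of, sub_ne_zero]
    exact fun h => ha (Units.ext h)
  have hεr : MonoidAlgebra.lift ℂ ℂ A 1 r = 0 := by
    simp [r]
  have := charModule.isIso_smul_id _ r hρr
  exact ModuleCat.subsingleton_of_isZero <|
    isZero_Tor_of_smul r (charModule.smul_id_eq_zero _ r hεr) n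

/-- Let `A` be a finitely generated abelian group, `R = ℂ[A]` its group
algebra, `ε : R → ℂ` the augmentation, and `ρ : A → ℂ*` a nontrivial character.  Then
`Tor_n^R(ℂ_ρ, ℂ_ε) = 0` for all `n ≥ 0`. -/
theorem stmt_13 (A : Type) [CommGroup A] [Group.FG A]
    (ρ : A →* ℂˣ) (hρ : ρ ≠ 1) (n : ℕ) :
    Subsingleton
      (((Tor (ModuleCat (MonoidAlgebra ℂ A)) n).obj
          (charModule A (MonoidAlgebra.lift ℂ ℂ A ((Units.coeHom ℂ).comp ρ)).toRingHom)).obj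
        (charModule A (MonoidAlgebra.lift ℂ ℂ A (1 : A →* ℂ)).toRingHom)) :=
  stmt_13_general A ρ hρ n
end
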